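/- arXiv:2504.12666 — 9 statements merged into one kernel-verified Lean document; each statement's English description precedes it below -/
import Mathlib

section
/- Let (a_j)_{j∈ℕ} be a sequence of nonnegative real numbers and C₀ > 0 a constant such that for every R ≥ 0 the set {j ∈ ℕ : a_j ≤ R} is finite with cardinality at most C₀(1 + R²). Then there exists C > 0 (depending only on C₀) such that for every ε ∈ (0,1), the series ∑_{j∈ℕ} (1 + ε a_j)^{−3} converges and ∑_{j∈ℕ} (1 + ε a_j)^{−3} ≤ C ε^{−2}. -/
/-!
With `b k = (k + 1)⁻³` we have `(1 + x)⁻³ ≤ b ⌊x⌋₊`, and summation by parts gives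
`∑ⱼ b ⌊xⱼ⌋₊ = ∑ₖ Nₖ (b k - b (k + 1))`, where `Nₖ = #{j | ⌊xⱼ⌋₊ ≤ k} ≤ #{j | xⱼ ≤ k + 1}`.
If `Nₖ ≤ K (k + 1)²`, then since `b k - b (k + 1) ≤ 3 (k + 1)⁻⁴` each term is at most
`3K (k + 1)⁻² ≤ 6K ((k + 1)⁻¹ - (k + 2)⁻¹)`, which telescopes to `6K`.
For `xⱼ = ε aⱼ` with `ε < 1`, the Weyl-type bound gives `K = 2 C₀ ε⁻²`.
-/

open Real Filter Topology Finset

lemma hasSum_sub_succ_of_antitone {b : ℕ → ℝ} (hb : Antitone b)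
    (hb0 : Tendsto b atTop (𝓝 0)) : HasSum (fun k => b k - b (k + 1)) (b 0) := by
  rw [hasSum_iff_tendsto_nat_of_nonneg fun k => sub_nonneg.2 (hb k.le_succ)]
  simp only [sum_range_sub']
  simpa using tendsto_const_nhds.sub hb0

lemma hasSum_ite_le_sub_succ_of_antitone {b : ℕ → ℝ} (hb : Antitone b)
    (hb0 : Tendsto b atTop (𝓝 0)) (m : ℕ) :
    HasSum (fun k => if m ≤ k then b k - b (k + 1) else 0) (b m) := by
  rw [← hasSum_nat_add_iff' m]
  have hshift := hasSum_sub_succ_of_antitone (b := fun n => b (n + m))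
    (fun i j hij => hb (by omega)) (hb0.comp (tendsto_add_atTop_nat m))
  have hhead : ∑ i ∈ range m, (if m ≤ i then b i - b (i + 1) else 0) = 0 :=
    sum_eq_zero fun i hi => if_neg (not_le.2 (mem_range.1 hi))
  simpa [hhead, Nat.add_right_comm] using hshift

lemma hasSum_card_filter_le_mul_sub_succ {ι : Type*} (s : Finset ι) (φ : ι → ℕ)
    {b : ℕ → ℝ} (hb : Antitone b) (hb0 : Tendsto b atTop (𝓝 0)) :
    HasSum (fun k => (#{j ∈ s | φ j ≤ k} : ℝ) * (b k - b (k + 1))) (∑ j ∈ s, b (φ j)) := by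
  convert hasSum_sum fun j _ => hasSum_ite_le_sub_succ_of_antitone hb hb0 (φ j) with k
  rw [← sum_filter, sum_const, nsmul_eq_mul]

lemma sq_mul_inv_pow_three_sub_le {u : ℝ} (hu : 0 < u) :
    u ^ 2 * ((u ^ 3)⁻¹ - ((u + 1) ^ 3)⁻¹) ≤ 6 * (u⁻¹ - (u + 1)⁻¹) := by
  rw [inv_sub_inv (by positivity) (by positivity), inv_sub_inv hu.ne' (by positivity),
    mul_div_assoc', mul_div_assoc', div_le_div_iff₀ (by positivity) (by positivity)]
  nlinarith [pow_pos hu 3, pow_pos hu 4, pow_pos hu 5, pow_pos hu 6]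

lemma sum_inv_one_add_pow_three_le {ι : Type*} (x : ι → ℝ) (hx : ∀ j, 0 ≤ x j)
    (s : Finset ι) (K : ℝ) (hK : ∀ k : ℕ, (#{j ∈ s | x j ≤ k + 1} : ℝ) ≤ K * (k + 1) ^ 2) :
    ∑ j ∈ s, ((1 + x j) ^ 3)⁻¹ ≤ 6 * K := by
  have hK0 : 0 ≤ K := by simpa using (Nat.cast_nonneg _).trans (hK 0)
  set b : ℕ → ℝ := fun k => (((k : ℝ) + 1) ^ 3)⁻¹
  set c : ℕ → ℝ := fun k => ((k : ℝ) + 1)⁻¹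
  have hb : Antitone b := fun m n hmn => by simp only [b]; gcongr
  have hc : Antitone c := fun m n hmn => by simp only [c]; gcongr
  have hc0 : Tendsto c atTop (𝓝 0) := by
    simpa [c, one_div] using tendsto_one_div_add_atTop_nhds_zero_nat (𝕜 := ℝ)
  have hb0 : Tendsto b atTop (𝓝 0) := by simpa [b, c, inv_pow] using hc0.pow 3
  have hterm (k : ℕ) : (#{j ∈ s | ⌊x j⌋₊ ≤ k} : ℝ) * (b k - b (k + 1)) ≤
      6 * K * (c k - c (k + 1)) := by
    have hcard : (#{j ∈ s | ⌊x j⌋₊ ≤ k} : ℝ) ≤ K * (k + 1) ^ 2 := by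
      refine le_trans ?_ (hK k)
      gcongr with j _
      intro hj
      have : (⌊x j⌋₊ : ℝ) ≤ k := by exact_mod_cast hj
      linarith [Nat.lt_floor_add_one (x j)]
    calc (#{j ∈ s | ⌊x j⌋₊ ≤ k} : ℝ) * (b k - b (k + 1))
        ≤ K * (k + 1) ^ 2 * (b k - b (k + 1)) :=
          mul_le_mul_of_nonneg_right hcard (sub_nonneg.2 (hb k.le_succ))
      _ ≤ K * (6 * (c k - c (k + 1))) := by
          rw [mul_assoc]
          refine mul_le_mul_of_nonneg_left ?_ hK0
          simpa [b, c, add_assoc, one_add_one_eq_two] using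
            sq_mul_inv_pow_three_sub_le (u := (k : ℝ) + 1) (by positivity)
      _ = 6 * K * (c k - c (k + 1)) := by ring
  calc ∑ j ∈ s, ((1 + x j) ^ 3)⁻¹ ≤ ∑ j ∈ s, b ⌊x j⌋₊ := by
        refine sum_le_sum fun j _ => ?_
        have := Nat.floor_le (hx j)
        simp only [b]
        rw [add_comm 1]
        gcongr
    _ ≤ 6 * K * c 0 :=
        hasSum_le hterm (hasSum_card_filter_le_mul_sub_succ s _ hb hb0)
          ((hasSum_sub_succ_of_antitone hc hc0).mul_left (6 * K))
    _ = 6 * K := by simp [c]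

lemma card_filter_le_ncard {ι : Type*} {s : Finset ι} {p q : ι → Prop} [DecidablePred p]
    (hpq : ∀ j, p j → q j) (hq : {j | q j}.Finite) : #{j ∈ s | p j} ≤ {j | q j}.ncard := by
  rw [← Set.ncard_coe_finset]
  exact Set.ncard_le_ncard (fun j hj => hpq j (mem_filter.1 hj).2) hq

/-- If a sequence of nonnegative reals has counting function bounded by
`C₀(1 + R²)`, then `∑ (1 + ε a_j)^{-3} ≤ C ε^{-2}` for all `ε ∈ (0,1)`. -/
theorem sum_inv_cube_bound
    (a : ℕ → ℝ) (ha : ∀ j, 0 ≤ a j) (C₀ : ℝ) (hC₀ : 0 < C₀)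
    (hcount : ∀ R : ℝ, 0 ≤ R → {j : ℕ | a j ≤ R}.Finite ∧
      ({j : ℕ | a j ≤ R}.ncard : ℝ) ≤ C₀ * (1 + R ^ 2)) :
    ∃ C : ℝ, 0 < C ∧ ∀ ε : ℝ, ε ∈ Set.Ioo (0 : ℝ) 1 →
      Summable (fun j : ℕ => (1 + ε * a j) ^ (-3 : ℝ)) ∧
      ∑' j : ℕ, (1 + ε * a j) ^ (-3 : ℝ) ≤ C * ε ^ (-2 : ℝ) := by
  refine ⟨12 * C₀, by positivity, fun ε ⟨hε0, hε1⟩ => ?_⟩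
  have hcard (s : Finset ℕ) (k : ℕ) :
      (#{j ∈ s | ε * a j ≤ k + 1} : ℝ) ≤ 2 * C₀ * (ε ^ 2)⁻¹ * (k + 1) ^ 2 := by
    have hR : 1 ≤ (k + 1) / ε := (one_le_div hε0).2 (by linarith [k.cast_nonneg (α := ℝ)])
    obtain ⟨hfin, hN⟩ := hcount ((k + 1) / ε) (by positivity)
    calc (#{j ∈ s | ε * a j ≤ k + 1} : ℝ) ≤ {j | a j ≤ (k + 1) / ε}.ncard := by
          exact_mod_cast card_filter_le_ncard (fun j hj => (le_div_iff₀' hε0).2 hj) hfin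
      _ ≤ C₀ * (1 + ((k + 1) / ε) ^ 2) := hN
      _ ≤ 2 * C₀ * ((k + 1) / ε) ^ 2 := by nlinarith [one_le_pow₀ (n := 2) hR]
      _ = 2 * C₀ * (ε ^ 2)⁻¹ * (k + 1) ^ 2 := by ring
  have hbound (s : Finset ℕ) :
      ∑ j ∈ s, (1 + ε * a j) ^ (-3 : ℝ) ≤ 12 * C₀ * ε ^ (-2 : ℝ) := by
    have := sum_inv_one_add_pow_three_le (fun j => ε * a j)
      (fun j => mul_nonneg hε0.le (ha j)) s _ (hcard s)
    simp only [rpow_neg_ofNat, zpow_neg, zpow_ofNat]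
    linarith
  have hnonneg : 0 ≤ fun j => (1 + ε * a j) ^ (-3 : ℝ) :=
    fun j => rpow_nonneg (by nlinarith [ha j]) _
  exact ⟨summable_of_sum_le hnonneg hbound, Real.tsum_le_of_sum_le hnonneg hbound⟩
end

section
/- Let n ∈ ℕ, let ℓ : Fin n → ℝ, let w : Fin n → ℝ with w_i ≥ 0 for all i, and let σ > 0. Then (1/(√(2π)·σ)) ∫_ℝ |∑_{i} w_i e^{i ℓ_i ξ}|² e^{−ξ²/(2σ²)} dξ ≥ ∑_{v ∈ ℓ(Fin n)} ( ∑_{i : ℓ_i = v} w_i )², where the outer sum on the right runs over the (finite) set of values attained by ℓ. In particular the left-hand side is at least ∑_i w_i². -/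
/-!
Expanding `|S(ξ)|²` and integrating term by term against the centred Gaussian of variance `σ²`
turns the Gaussian average into `∑ᵢ ∑ⱼ wᵢ wⱼ φ(ℓᵢ - ℓⱼ)`, where `φ(t) = exp (-σ² t² / 2)` is the
characteristic function of that Gaussian. Since `φ > 0` and `φ 0 = 1`, dropping the pairs with
`ℓᵢ ≠ ℓⱼ` only decreases this nonnegative double sum, and what remains is the sum over the level
sets of `ℓ` of the squared fibre weights.
-/

open Complex Real MeasureTheory ProbabilityTheory Finset
open scoped ComplexConjugate

section ExponentialSums

variable {ι : Type*} [Fintype ι]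

lemma ofReal_norm_sum_mul_exp_sq (c : ι → ℂ) (ℓ : ι → ℝ) (ξ : ℝ) :
    ((‖∑ i, c i * cexp (I * ℓ i * ξ)‖ ^ 2 : ℝ) : ℂ) =
      ∑ i, ∑ j, c i * conj (c j) * cexp (↑(ℓ i - ℓ j) * ξ * I) := by
  rw [ofReal_pow, ← mul_conj', map_sum, sum_mul_sum]
  refine sum_congr rfl fun i _ => sum_congr rfl fun j _ => ?_
  simp only [map_mul, ← exp_conj, conj_I, conj_ofReal]
  rw [mul_mul_mul_comm, ← Complex.exp_add]
  push_cast
  ring_nf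

lemma integral_norm_sum_mul_exp_sq (μ : Measure ℝ) [IsFiniteMeasure μ] (c : ι → ℂ) (ℓ : ι → ℝ) :
    ∫ ξ, ‖∑ i, c i * cexp (I * ℓ i * ξ)‖ ^ 2 ∂μ =
      (∑ i, ∑ j, c i * conj (c j) * charFun μ (ℓ i - ℓ j)).re := by
  have integrable_exp (t : ℝ) : Integrable (fun ξ : ℝ => cexp (t * ξ * I)) μ :=
    (integrable_const (1 : ℝ)).mono (by fun_prop)
      (ae_of_all _ fun ξ => by rw [← ofReal_mul, norm_exp_ofReal_mul_I, norm_one])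
  rw [← ofReal_re (∫ _, _ ∂μ), ← integral_complex_ofReal]
  simp_rw [ofReal_norm_sum_mul_exp_sq, charFun_apply_real]
  rw [integral_finsetSum _ fun i _ =>
    integrable_finsetSum _ fun j _ => (integrable_exp _).const_mul _]
  congr 1
  refine sum_congr rfl fun i _ => ?_
  rw [integral_finsetSum _ fun j _ => (integrable_exp _).const_mul _]
  exact sum_congr rfl fun j _ => integral_const_mul _ _

end ExponentialSums

lemma charFun_gaussianReal_zero (v : NNReal) (t : ℝ) :
    charFun (gaussianReal 0 v) t = rexp (-(v * t ^ 2 / 2)) := by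
  rw [charFun_gaussianReal, ofReal_exp]
  push_cast
  ring_nf

lemma gaussian_average_eq_integral_gaussianReal {σ : ℝ} (hσ : 0 < σ) (f : ℝ → ℝ) :
    1 / (√(2 * π) * σ) * ∫ ξ, f ξ * rexp (-ξ ^ 2 / (2 * σ ^ 2)) =
      ∫ ξ, f ξ ∂gaussianReal 0 (σ ^ 2).toNNReal := by
  have hv : (σ ^ 2).toNNReal ≠ 0 := by simp [hσ.ne']
  rw [integral_gaussianReal_eq_integral_smul hv, ← integral_const_mul]
  congr 1 with ξ
  rw [gaussianPDFReal, Real.coe_toNNReal _ (sq_nonneg σ), smul_eq_mul,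
    sqrt_mul (by positivity : (0 : ℝ) ≤ 2 * π), sqrt_sq hσ.le, sub_zero]
  ring

section Fibers

variable {ι α R : Type*} [Fintype ι] [DecidableEq α] [CommSemiring R] (ℓ : ι → α) (w : ι → R)

lemma sum_image_sq_sum_fiber_eq :
    ∑ v ∈ image ℓ univ, (∑ i ∈ univ.filter (fun i => ℓ i = v), w i) ^ 2 =
      ∑ i, ∑ j ∈ univ.filter (fun j => ℓ j = ℓ i), w i * w j := by
  rw [← sum_fiberwise_of_maps_to (g := ℓ) (fun i _ => mem_image_of_mem ℓ (mem_univ i))]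
  refine sum_congr rfl fun v _ => ?_
  rw [sq, sum_mul_sum]
  refine sum_congr rfl fun i hi => ?_
  rw [(mem_filter.1 hi).2]

section Order

variable [PartialOrder R] [IsOrderedRing R]

lemma sum_image_sq_sum_fiber_le_sum_sum_mul (hw : ∀ i, 0 ≤ w i) (K : α → α → R)
    (hK : ∀ a b, 0 ≤ K a b) (hK_diag : ∀ a, K a a = 1) :
    ∑ v ∈ image ℓ univ, (∑ i ∈ univ.filter (fun i => ℓ i = v), w i) ^ 2 ≤
      ∑ i, ∑ j, w i * w j * K (ℓ i) (ℓ j) := by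
  rw [sum_image_sq_sum_fiber_eq]
  refine sum_le_sum fun i _ => ?_
  calc ∑ j ∈ univ.filter (fun j => ℓ j = ℓ i), w i * w j
      = ∑ j ∈ univ.filter (fun j => ℓ j = ℓ i), w i * w j * K (ℓ i) (ℓ j) :=
        sum_congr rfl fun j hj => by rw [(mem_filter.1 hj).2, hK_diag, mul_one]
    _ ≤ ∑ j, w i * w j * K (ℓ i) (ℓ j) :=
        sum_le_sum_of_subset_of_nonneg (filter_subset _ _)
          fun j _ _ => mul_nonneg (mul_nonneg (hw i) (hw j)) (hK _ _)

lemma sum_sq_le_sum_image_sq_sum_fiber (hw : ∀ i, 0 ≤ w i) :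
    ∑ i, w i ^ 2 ≤ ∑ v ∈ image ℓ univ, (∑ i ∈ univ.filter (fun i => ℓ i = v), w i) ^ 2 := by
  rw [← sum_fiberwise_of_maps_to (g := ℓ) (fun i _ => mem_image_of_mem ℓ (mem_univ i))]
  exact sum_le_sum fun v _ => sum_sq_le_sq_sum_of_nonneg fun i _ => hw i

end Order

end Fibers

lemma gaussian_average_norm_sum_mul_exp_sq {ι : Type*} [Fintype ι] (ℓ w : ι → ℝ) {σ : ℝ}
    (hσ : 0 < σ) :
    1 / (√(2 * π) * σ) *
        ∫ ξ : ℝ, ‖∑ i, (w i : ℂ) * cexp (I * ℓ i * ξ)‖ ^ 2 * rexp (-ξ ^ 2 / (2 * σ ^ 2)) =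
      ∑ i, ∑ j, w i * w j * rexp (-(σ ^ 2 * (ℓ i - ℓ j) ^ 2 / 2)) := by
  rw [gaussian_average_eq_integral_gaussianReal hσ, integral_norm_sum_mul_exp_sq]
  simp only [charFun_gaussianReal_zero, Real.coe_toNNReal _ (sq_nonneg σ), conj_ofReal,
    ← ofReal_mul, re_sum, ofReal_re]

/-- Diagonal lower bound for the Gaussian average of the squared modulus of an
exponential sum with nonnegative weights; in particular it is at least `∑ wᵢ²`. -/
theorem gaussian_average_diagonal_lower_bound
    (n : ℕ) (ℓ w : Fin n → ℝ) (hw : ∀ i, 0 ≤ w i) (σ : ℝ) (hσ : 0 < σ) :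
    (∑ v ∈ Finset.image ℓ Finset.univ,
        (∑ i ∈ Finset.univ.filter (fun i => ℓ i = v), w i) ^ 2 ≤
      (1 / (Real.sqrt (2 * Real.pi) * σ)) *
        ∫ ξ : ℝ, (‖∑ i, (w i : ℂ) * Complex.exp (Complex.I * ℓ i * ξ)‖) ^ 2 *
          Real.exp (-ξ ^ 2 / (2 * σ ^ 2))) ∧
    (∑ i, w i ^ 2 ≤
      (1 / (Real.sqrt (2 * Real.pi) * σ)) *
        ∫ ξ : ℝ, (‖∑ i, (w i : ℂ) * Complex.exp (Complex.I * ℓ i * ξ)‖) ^ 2 *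
          Real.exp (-ξ ^ 2 / (2 * σ ^ 2))) := by
  rw [gaussian_average_norm_sum_mul_exp_sq ℓ w hσ]
  have diagonal_le := sum_image_sq_sum_fiber_le_sum_sum_mul ℓ w hw
    (fun a b => rexp (-(σ ^ 2 * (a - b) ^ 2 / 2))) (fun _ _ => (exp_pos _).le) (by simp)
  exact ⟨diagonal_le, (sum_sq_le_sum_image_sq_sum_fiber ℓ w hw).trans diagonal_le⟩
end

section
/- For every real M ≥ 2 there exists a constant C > 0 (depending only on M) such that for all r > 0 and all σ ≥ 1: (1/√(2π)) ∫_ℝ (1 + |r − ση|)^{−M} e^{−η²/2} dη ≤ C σ^{−1} ( e^{−r²/(8σ²)} + (1 + r)^{1−M} ). -/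
open Real MeasureTheory

private lemma rpow_neg_le_inv_one_add_sq {M : ℝ} (hM : 2 ≤ M) (x : ℝ) :
    (1 + |x|) ^ (-M) ≤ (1 + x ^ 2)⁻¹ := by
  have h1 : (1:ℝ) ≤ 1 + |x| := le_add_of_nonneg_right (abs_nonneg x)
  have h2 : (1 + |x|) ^ (-M) ≤ (1 + |x|) ^ (-(2:ℝ)) :=
    Real.rpow_le_rpow_of_exponent_le h1 (by linarith)
  refine h2.trans ?_
  have h3 : (1 + |x|) ^ (-(2:ℝ)) = ((1 + |x|) ^ (2:ℕ))⁻¹ := by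
    rw [Real.rpow_neg (by linarith), ← Real.rpow_natCast]
    norm_num
  rw [h3]
  have hx2 : (0:ℝ) < 1 + x ^ 2 := by positivity
  have hle : 1 + x ^ 2 ≤ (1 + |x|) ^ (2:ℕ) := by
    have := sq_abs x
    nlinarith [abs_nonneg x]
  exact inv_anti₀ hx2 hle

set_option maxHeartbeats 1000000 in
/-- Estimate for the Gaussian-weighted integral `J_M(r,σ)`:
`(1/√(2π)) ∫ (1+|r−ση|)^{−M} e^{−η²/2} dη ≤ C σ⁻¹ (e^{−r²/8σ²} + (1+r)^{1−M})`. -/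
theorem gaussian_shifted_weight_bound :
    ∀ M : ℝ, 2 ≤ M → ∃ C : ℝ, 0 < C ∧ ∀ r : ℝ, 0 < r → ∀ σ : ℝ, 1 ≤ σ →
      (1 / Real.sqrt (2 * Real.pi)) *
          ∫ η : ℝ, (1 + |r - σ * η|) ^ (-M) * Real.exp (-η ^ 2 / 2) ≤
        C * σ⁻¹ * (Real.exp (-r ^ 2 / (8 * σ ^ 2)) + (1 + r) ^ (1 - M)) := by
  intro M hM
  refine ⟨2 ^ M + 2 * π + 1, by positivity, ?_⟩
  intro r hr σ hσ
  have hσ0 : (0:ℝ) < σ := lt_of_lt_of_le one_pos hσ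
  set S := Real.sqrt (2 * π) with hS
  have hS1 : (1:ℝ) ≤ S := by
    rw [hS, show (1:ℝ) = Real.sqrt 1 by simp]
    exact Real.sqrt_le_sqrt (by nlinarith [pi_gt_three])
  have hS0 : (0:ℝ) < S := lt_of_lt_of_le one_pos hS1
  set E : ℝ := Real.exp (-r ^ 2 / (8 * σ ^ 2)) with hE
  have hE0 : 0 < E := Real.exp_pos _
  set f : ℝ → ℝ := fun η => (1 + |r - σ * η|) ^ (-M) * Real.exp (-η ^ 2 / 2) with hf
  set g : ℝ → ℝ := fun η => (1 + (σ * η - r) ^ 2)⁻¹ with hg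
  have h1r : (0:ℝ) < 1 + r := by linarith
  -- integrability of g and value of its integral
  have hg_int : Integrable g := by
    have h1 : Integrable (fun y : ℝ => (1 + (y - r) ^ 2)⁻¹) :=
      integrable_inv_one_add_sq.comp_sub_right r
    exact h1.comp_mul_left' (ne_of_gt hσ0)
  have hg_eval : ∫ η : ℝ, g η = σ⁻¹ * π := by
    have h1 : ∫ η : ℝ, g η
        = ∫ η : ℝ, (fun y : ℝ => (1 + (y - r) ^ 2)⁻¹) (σ * η) := rfl
    rw [h1, Measure.integral_comp_mul_left (fun y : ℝ => (1 + (y - r) ^ 2)⁻¹) σ,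
      integral_sub_right_eq_self (fun y : ℝ => (1 + y ^ 2)⁻¹) r,
      integral_univ_inv_one_add_sq, smul_eq_mul, abs_of_pos (inv_pos.mpr hσ0)]
  -- pointwise bound f ≤ g
  have hfg : ∀ η : ℝ, f η ≤ g η := by
    intro η
    have h1 := rpow_neg_le_inv_one_add_sq hM (r - σ * η)
    have h2 : Real.exp (-η ^ 2 / 2) ≤ 1 := by
      rw [Real.exp_le_one_iff]
      nlinarith [sq_nonneg η]
    have h3 : (r - σ * η) ^ 2 = (σ * η - r) ^ 2 := by ring
    calc f η ≤ (1 + |r - σ * η|) ^ (-M) * 1 := by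
          have : (0:ℝ) ≤ (1 + |r - σ * η|) ^ (-M) := by positivity
          exact mul_le_mul_of_nonneg_left h2 this
      _ = (1 + |r - σ * η|) ^ (-M) := mul_one _
      _ ≤ (1 + (r - σ * η) ^ 2)⁻¹ := h1
      _ = g η := by rw [hg]; simp only [h3]
  have hf_nonneg : ∀ η : ℝ, 0 ≤ f η := fun η => by positivity
  have hf_cont : Continuous f := by
    apply Continuous.mul
    · apply Continuous.rpow_const
      · continuity
      · intro x
        left
        positivity
    · continuity
  have hf_int : Integrable f := by
    refine hg_int.mono' hf_cont.aestronglyMeasurable ?_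
    filter_upwards with η
    rw [Real.norm_eq_abs, abs_of_nonneg (hf_nonneg η)]
    exact hfg η
  have hf_int_nonneg : 0 ≤ ∫ η : ℝ, f η := integral_nonneg hf_nonneg
  -- gaussian facts
  have hgauss_eq : (fun η : ℝ => Real.exp (-(1/2) * η ^ 2)) =
      fun η : ℝ => Real.exp (-η ^ 2 / 2) := by
    funext η; ring_nf
  have hgauss_int : Integrable (fun η : ℝ => Real.exp (-η ^ 2 / 2)) := by
    rw [← hgauss_eq]
    exact integrable_exp_neg_mul_sq (by norm_num)
  have hgauss_eval : ∫ η : ℝ, Real.exp (-η ^ 2 / 2) = S := by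
    rw [← hgauss_eq, integral_gaussian, hS]
    rw [show π / (1/2 : ℝ) = 2 * π by ring]
  by_cases hcase : σ ≤ 1 + r
  · -- main case: σ ≤ 1 + r
    -- pointwise bound
    have hptw : ∀ η : ℝ, f η ≤
        2 ^ M * (1 + r) ^ (-M) * Real.exp (-η ^ 2 / 2) + E * g η := by
      intro η
      have hgpos : 0 ≤ g η := by rw [hg]; positivity
      by_cases hc : r / 2 ≤ |r - σ * η|
      · have hb1 : (1 + r) / 2 ≤ 1 + |r - σ * η| := by
          have := abs_nonneg (r - σ * η)
          linarith
        have hb2 : (1 + |r - σ * η|) ^ (-M) ≤ ((1 + r) / 2) ^ (-M) :=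
          Real.rpow_le_rpow_of_nonpos (by linarith) hb1 (by linarith)
        have hb3 : ((1 + r) / 2) ^ (-M) = 2 ^ M * (1 + r) ^ (-M) := by
          rw [Real.div_rpow (by linarith) (by norm_num),
            Real.rpow_neg (by norm_num : (0:ℝ) ≤ 2), div_eq_mul_inv, inv_inv, mul_comm]
        have hexp : (0:ℝ) < Real.exp (-η ^ 2 / 2) := Real.exp_pos _
        have : f η ≤ 2 ^ M * (1 + r) ^ (-M) * Real.exp (-η ^ 2 / 2) := by
          rw [hf]
          have := hb2.trans_eq hb3
          exact mul_le_mul_of_nonneg_right this (le_of_lt hexp)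
        nlinarith [mul_nonneg hE0.le hgpos]
      · push_neg at hc
        have hση : r / 2 < σ * η := by
          rcases abs_lt.mp hc with ⟨h1, h2⟩
          linarith
        have hη : r / (2 * σ) < η := by
          rw [div_lt_iff₀ (by positivity)] at hση ⊢
          nlinarith
        have hηpos : 0 < η := lt_trans (by positivity) hη
        have hexp : Real.exp (-η ^ 2 / 2) ≤ E := by
          rw [hE, Real.exp_le_exp]
          have hq : r ^ 2 ≤ η ^ 2 * (4 * σ ^ 2) := by
            have h5 : r < 2 * σ * η := by
              rw [div_lt_iff₀ (by positivity)] at hη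
              linarith
            nlinarith [sq_nonneg (2 * σ * η - r), mul_pos hr (mul_pos hσ0 hηpos)]
          rw [neg_div, neg_div, neg_le_neg_iff,
            div_le_div_iff₀ (by positivity) (by norm_num : (0:ℝ) < 2)]
          nlinarith
        have h1 : f η ≤ g η * Real.exp (-η ^ 2 / 2) := by
          rw [hf]
          exact mul_le_mul_of_nonneg_right ((rpow_neg_le_inv_one_add_sq hM _).trans_eq
            (by rw [hg]; simp only [show (r - σ * η) ^ 2 = (σ * η - r) ^ 2 by ring]))
            (Real.exp_pos _).le
        have h2 : g η * Real.exp (-η ^ 2 / 2) ≤ E * g η := by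
          rw [mul_comm (E) (g η)]
          exact mul_le_mul_of_nonneg_left hexp hgpos
        have hpos1 : (0:ℝ) ≤ 2 ^ M * (1 + r) ^ (-M) * Real.exp (-η ^ 2 / 2) := by
          positivity
        linarith
    -- integrate the pointwise bound
    have hrhs_int : Integrable (fun η : ℝ =>
        2 ^ M * (1 + r) ^ (-M) * Real.exp (-η ^ 2 / 2) + E * g η) :=
      ((hgauss_int.const_mul _)).add (hg_int.const_mul _)
    have hInt : ∫ η : ℝ, f η ≤ 2 ^ M * (1 + r) ^ (-M) * S + E * (σ⁻¹ * π) := by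
      have := integral_mono hf_int hrhs_int hptw
      rwa [integral_add (hgauss_int.const_mul _) (hg_int.const_mul _),
        integral_const_mul, integral_const_mul, hgauss_eval, hg_eval] at this
    -- conclude
    have hstep : (1 / S) * ∫ η : ℝ, f η ≤ 2 ^ M * (1 + r) ^ (-M) + π * (σ⁻¹ * E) := by
      have h1 : (1 / S) * ∫ η : ℝ, f η ≤
          (1 / S) * (2 ^ M * (1 + r) ^ (-M) * S + E * (σ⁻¹ * π)) := by
        apply mul_le_mul_of_nonneg_left hInt (by positivity)
      refine h1.trans ?_
      rw [mul_add]
      have h2 : (1 / S) * (2 ^ M * (1 + r) ^ (-M) * S) = 2 ^ M * (1 + r) ^ (-M) := by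
        field_simp
      have h3 : (1 / S) * (E * (σ⁻¹ * π)) ≤ π * (σ⁻¹ * E) := by
        rw [div_mul_eq_mul_div, one_mul, div_le_iff₀ hS0]
        have : π * (σ⁻¹ * E) * 1 ≤ π * (σ⁻¹ * E) * S :=
          mul_le_mul_of_nonneg_left hS1 (by positivity)
        nlinarith
      linarith
    have hkey : 2 ^ M * (1 + r) ^ (-M) ≤ 2 ^ M * (σ⁻¹ * (1 + r) ^ (1 - M)) := by
      apply mul_le_mul_of_nonneg_left _ (by positivity : (0:ℝ) ≤ 2 ^ M)
      rw [show (1:ℝ) - M = 1 + (-M) by ring, Real.rpow_add h1r, Real.rpow_one]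
      rw [← mul_assoc]
      have h5 : (1:ℝ) ≤ σ⁻¹ * (1 + r) := by
        rw [← div_eq_inv_mul, le_div_iff₀ hσ0]
        linarith
      nlinarith [Real.rpow_nonneg h1r.le (-M)]
    have hfinal : 2 ^ M * (σ⁻¹ * (1 + r) ^ (1 - M)) + π * (σ⁻¹ * E) ≤
        (2 ^ M + 2 * π + 1) * σ⁻¹ * (E + (1 + r) ^ (1 - M)) := by
      have hEpos := hE0
      have hp : (0:ℝ) ≤ (1 + r) ^ (1 - M) := Real.rpow_nonneg h1r.le _
      have hσinv : (0:ℝ) ≤ σ⁻¹ := by positivity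
      have h2M : (0:ℝ) < 2 ^ M := Real.rpow_pos_of_pos (by norm_num) M
      have ha : (0:ℝ) ≤ σ⁻¹ * E := mul_nonneg hσinv hE0.le
      have hb : (0:ℝ) ≤ σ⁻¹ * (1 + r) ^ (1 - M) := mul_nonneg hσinv hp
      nlinarith [mul_nonneg h2M.le ha, mul_nonneg h2M.le hb,
        mul_nonneg pi_pos.le ha, mul_nonneg pi_pos.le hb, ha, hb]
    calc (1 / S) * ∫ η : ℝ, f η ≤ 2 ^ M * (1 + r) ^ (-M) + π * (σ⁻¹ * E) := hstep
      _ ≤ 2 ^ M * (σ⁻¹ * (1 + r) ^ (1 - M)) + π * (σ⁻¹ * E) := by linarith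
      _ ≤ (2 ^ M + 2 * π + 1) * σ⁻¹ * (E + (1 + r) ^ (1 - M)) := hfinal
  · -- easy case: 1 + r < σ
    push_neg at hcase
    have hInt : ∫ η : ℝ, f η ≤ σ⁻¹ * π := by
      rw [← hg_eval]
      exact integral_mono hf_int hg_int hfg
    have h1 : (1 / S) * ∫ η : ℝ, f η ≤ σ⁻¹ * π := by
      calc (1 / S) * ∫ η : ℝ, f η ≤ 1 * ∫ η : ℝ, f η := by
            apply mul_le_mul_of_nonneg_right _ hf_int_nonneg
            rw [div_le_one hS0]; exact hS1
        _ = ∫ η : ℝ, f η := one_mul _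
        _ ≤ σ⁻¹ * π := hInt
    refine h1.trans ?_
    -- E ≥ 1/2 here since r < σ
    have hEhalf : (1:ℝ)/2 ≤ E := by
      have h2 : -r ^ 2 / (8 * σ ^ 2) + 1 ≤ E := by
        rw [hE]
        have := Real.add_one_le_exp (-r ^ 2 / (8 * σ ^ 2))
        linarith
      have h3 : r ^ 2 ≤ σ ^ 2 := by nlinarith
      have h4 : r ^ 2 / (8 * σ ^ 2) ≤ 1/8 := by
        rw [div_le_iff₀ (by positivity)]
        nlinarith
      have h5 : -(1:ℝ)/8 ≤ -r ^ 2 / (8 * σ ^ 2) := by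
        rw [neg_div, neg_div]
        linarith
      linarith
    have hp : (0:ℝ) ≤ (1 + r) ^ (1 - M) := Real.rpow_nonneg h1r.le _
    have hσinv : (0:ℝ) < σ⁻¹ := by positivity
    have h2M : (0:ℝ) < 2 ^ M := Real.rpow_pos_of_pos (by norm_num) M
    have : π ≤ (2 ^ M + 2 * π + 1) * (E + (1 + r) ^ (1 - M)) := by
      nlinarith [pi_pos, hE0, hEhalf, mul_nonneg h2M.le hE0.le,
        mul_nonneg h2M.le hp, mul_nonneg pi_pos.le hp, hp]
    calc σ⁻¹ * π ≤ σ⁻¹ * ((2 ^ M + 2 * π + 1) * (E + (1 + r) ^ (1 - M))) :=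
          mul_le_mul_of_nonneg_left this hσinv.le
      _ = (2 ^ M + 2 * π + 1) * σ⁻¹ * (E + (1 + r) ^ (1 - M)) := by ring
end

section
/- For every real M ≥ 2 there exists a constant C > 0 (depending only on M) such that for all r > 0 and all σ ≥ 1: ∫_{{η ∈ ℝ : |η − r/σ| ≤ r/(2σ)}} (1 + |r − ση|)^{−M} e^{−η²/2} dη ≤ C σ^{−1} e^{−r²/(8σ²)}. -/
/-!
On the window `|η - r/σ| ≤ r/(2σ)` one has `η ≥ r/(2σ)`, so the Gaussian factor is at most
`e^{-r²/(8σ²)}`. What remains is bounded by the integral of `(1 + |r - ση|)^{-M}` over the whole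
line, which the substitution `u = r - ση` turns into `σ⁻¹ ∫ (1 + |u|)^{-M} du`, finite as `M > 1`.
-/

open Real MeasureTheory

lemma integrable_one_add_abs_rpow_neg {p : ℝ} (hp : 1 < p) :
    Integrable fun u : ℝ => (1 + |u|) ^ (-p) := by
  simpa [Real.norm_eq_abs] using
    integrable_one_add_norm (E := ℝ) (μ := volume) (r := p) (by simpa using hp)

lemma integrable_one_add_abs_sub_mul_rpow_neg {p : ℝ} (hp : 1 < p) (a : ℝ) {σ : ℝ}
    (hσ : σ ≠ 0) : Integrable fun η : ℝ => (1 + |a - σ * η|) ^ (-p) :=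
  ((integrable_one_add_abs_rpow_neg hp).comp_sub_left a).comp_mul_left' hσ

lemma integral_one_add_abs_sub_mul_rpow_neg (p a : ℝ) {σ : ℝ} (hσ : 0 < σ) :
    ∫ η : ℝ, (1 + |a - σ * η|) ^ (-p) = σ⁻¹ * ∫ u : ℝ, (1 + |u|) ^ (-p) := by
  rw [Measure.integral_comp_mul_left (fun x => (1 + |a - x|) ^ (-p)) σ,
    integral_sub_left_eq_self (fun x => (1 + |x|) ^ (-p)) volume a,
    abs_of_pos (inv_pos.2 hσ), smul_eq_mul]

lemma exp_neg_sq_half_le_of_near_peak {r σ η : ℝ} (hσ : 0 < σ)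
    (h : |η - r / σ| ≤ r / (2 * σ)) :
    exp (-η ^ 2 / 2) ≤ exp (-r ^ 2 / (8 * σ ^ 2)) := by
  have hpeak : r / σ = 2 * (r / (2 * σ)) := by field_simp
  have hwidth : 0 ≤ r / (2 * σ) := (abs_nonneg _).trans h
  have hη : r / (2 * σ) ≤ η := by linarith [(abs_le.1 h).1]
  calc exp (-η ^ 2 / 2) ≤ exp (-(r / (2 * σ)) ^ 2 / 2) := by gcongr
    _ = exp (-r ^ 2 / (8 * σ ^ 2)) := by congr 1; field_simp; ring

/-- The near-peak part of the Gaussian-weighted integral: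
`∫_{|η−r/σ|≤r/2σ} (1+|r−ση|)^{−M} e^{−η²/2} dη ≤ C σ⁻¹ e^{−r²/8σ²}`. -/
theorem gaussian_shifted_weight_near_peak :
    ∀ M : ℝ, 2 ≤ M → ∃ C : ℝ, 0 < C ∧ ∀ r : ℝ, 0 < r → ∀ σ : ℝ, 1 ≤ σ →
      ∫ η in {η : ℝ | |η - r / σ| ≤ r / (2 * σ)},
          (1 + |r - σ * η|) ^ (-M) * Real.exp (-η ^ 2 / 2) ≤
        C * σ⁻¹ * Real.exp (-r ^ 2 / (8 * σ ^ 2)) := by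
  intro M hM
  set I := ∫ u : ℝ, (1 + |u|) ^ (-M)
  have hI : 0 ≤ I := integral_nonneg fun u => by positivity
  refine ⟨I + 1, by linarith, fun r _ σ hσ => ?_⟩
  have hσ0 : 0 < σ := one_pos.trans_le hσ
  set S := {η : ℝ | |η - r / σ| ≤ r / (2 * σ)}
  have hS : MeasurableSet S := measurableSet_le (by fun_prop) (by fun_prop)
  set E := exp (-r ^ 2 / (8 * σ ^ 2))
  have hg : Integrable fun η : ℝ => (1 + |r - σ * η|) ^ (-M) * E :=
    (integrable_one_add_abs_sub_mul_rpow_neg (by linarith) r hσ0.ne').mul_const E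
  calc ∫ η in S, (1 + |r - σ * η|) ^ (-M) * exp (-η ^ 2 / 2)
      ≤ ∫ η in S, (1 + |r - σ * η|) ^ (-M) * E :=
        integral_mono_of_nonneg (.of_forall fun η => by positivity) hg.integrableOn
          (ae_restrict_of_forall_mem hS fun η hη => mul_le_mul_of_nonneg_left
            (exp_neg_sq_half_le_of_near_peak hσ0 hη) (by positivity))
    _ ≤ ∫ η, (1 + |r - σ * η|) ^ (-M) * E :=
        setIntegral_le_integral hg (.of_forall fun η => by positivity)
    _ = σ⁻¹ * I * E := by
        rw [integral_mul_const, integral_one_add_abs_sub_mul_rpow_neg M r hσ0]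
    _ ≤ (I + 1) * σ⁻¹ * E := by rw [mul_comm σ⁻¹ I]; gcongr; linarith
end

section
/- For every real M ≥ 2 there exists a constant C > 0 (depending only on M) such that for all r > 0 and all σ ≥ 1: ∫_{{η ∈ ℝ : |η − r/σ| ≥ r/(2σ)}} (1 + |r − ση|)^{−M} e^{−η²/2} dη ≤ C σ^{−1} (1 + r)^{1−M}. -/
open Real MeasureTheory Set

/-!
On the off-peak set, `|r - σ η| = σ |η - r/σ| ≥ r/2`, so after dropping the Gaussian factor the
integrand is dominated by `((1 + r)/4 + (σ/2) |η - r/σ|)^(-M)`. The integral of this majorant over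
all of `ℝ` is explicit, `2 (σ/2)⁻¹ ((1 + r)/4)^(1-M) / (M - 1) = 4^M / (M - 1) · σ⁻¹ (1 + r)^(1-M)`.
-/

theorem setIntegral_Ioi_comp_add_right {E : Type*} [NormedAddCommGroup E] [NormedSpace ℝ E]
    (f : ℝ → E) (a c : ℝ) : ∫ x in Ioi a, f (x + c) = ∫ x in Ioi (a + c), f x := by
  simpa using (measurePreserving_add_right volume c).setIntegral_preimage_emb
    (measurableEmbedding_addRight c) f (Ioi (a + c))

theorem integral_add_mul_abs_sub_rpow_neg {M c σ : ℝ} (hM : 1 < M) (hc : 0 < c) (hσ : 0 < σ)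
    (a : ℝ) : ∫ η, (c + σ * |η - a|) ^ (-M) = 2 * σ⁻¹ * c ^ (1 - M) / (M - 1) := by
  calc ∫ η, (c + σ * |η - a|) ^ (-M)
      = ∫ x, (c + σ * |x|) ^ (-M) := integral_sub_right_eq_self (fun x ↦ (c + σ * |x|) ^ (-M)) a
    _ = 2 * ∫ x in Ioi 0, (c + σ * x) ^ (-M) := integral_comp_abs (f := fun x ↦ (c + σ * x) ^ (-M))
    _ = 2 * (σ⁻¹ * ∫ x in Ioi 0, (x + c) ^ (-M)) := by
      simpa [add_comm c] using integral_comp_mul_left_Ioi (fun x ↦ (x + c) ^ (-M)) 0 hσ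
    _ = 2 * (σ⁻¹ * ∫ x in Ioi c, x ^ (-M)) := by
      rw [setIntegral_Ioi_comp_add_right (fun x ↦ x ^ (-M)), zero_add]
    _ = 2 * σ⁻¹ * c ^ (1 - M) / (M - 1) := by
      rw [integral_Ioi_rpow_of_lt (by linarith) hc, neg_add_eq_sub, neg_div, ← div_neg,
        neg_sub]
      ring

theorem integrable_add_mul_abs_sub_rpow_neg {M c σ : ℝ} (hM : 1 < M) (hc : 0 < c) (hσ : 0 < σ)
    (a : ℝ) : Integrable fun η ↦ (c + σ * |η - a|) ^ (-M) := by
  refine Integrable.of_integral_ne_zero ?_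
  rw [integral_add_mul_abs_sub_rpow_neg hM hc hσ]
  have : 0 < M - 1 := by linarith
  positivity

theorem one_add_abs_sub_rpow_neg_mul_exp_le {M r σ η : ℝ} (hM : 0 ≤ M) (hr : 0 ≤ r) (hσ : 0 < σ)
    (hη : r / (2 * σ) ≤ |η - r / σ|) :
    (1 + |r - σ * η|) ^ (-M) * exp (-η ^ 2 / 2) ≤ ((1 + r) / 4 + σ / 2 * |η - r / σ|) ^ (-M) := by
  have hdist : |r - σ * η| = σ * |η - r / σ| := by
    rw [abs_sub_comm, ← abs_of_pos hσ, ← abs_mul, abs_of_pos hσ, mul_sub, mul_div_cancel₀ _ hσ.ne']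
  have hfar : r / 2 ≤ σ * |η - r / σ| := by
    calc r / 2 = σ * (r / (2 * σ)) := by field_simp
      _ ≤ σ * |η - r / σ| := mul_le_mul_of_nonneg_left hη hσ.le
  calc (1 + |r - σ * η|) ^ (-M) * exp (-η ^ 2 / 2)
      ≤ (1 + |r - σ * η|) ^ (-M) :=
        mul_le_of_le_one_right (by positivity) (exp_le_one_iff.2 (by nlinarith [sq_nonneg η]))
    _ ≤ ((1 + r) / 4 + σ / 2 * |η - r / σ|) ^ (-M) := by
      refine rpow_le_rpow_of_nonpos (by positivity) ?_ (neg_nonpos.2 hM)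
      rw [hdist]
      linarith

/-- The off-peak part of the Gaussian-weighted integral:
`∫_{|η−r/σ|≥r/2σ} (1+|r−ση|)^{−M} e^{−η²/2} dη ≤ C σ⁻¹ (1+r)^{1−M}`. -/
theorem gaussian_shifted_weight_off_peak :
    ∀ M : ℝ, 2 ≤ M → ∃ C : ℝ, 0 < C ∧ ∀ r : ℝ, 0 < r → ∀ σ : ℝ, 1 ≤ σ →
      ∫ η in {η : ℝ | r / (2 * σ) ≤ |η - r / σ|},
          (1 + |r - σ * η|) ^ (-M) * Real.exp (-η ^ 2 / 2) ≤
        C * σ⁻¹ * (1 + r) ^ (1 - M) := by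
  intro M hM
  have hM1 : 0 < M - 1 := by linarith
  refine ⟨4 ^ M / (M - 1), by positivity, fun r hr σ hσ ↦ ?_⟩
  have hσ0 : 0 < σ := by linarith
  have hc : 0 < (1 + r) / 4 := by positivity
  set S := {η : ℝ | r / (2 * σ) ≤ |η - r / σ|}
  have hS : MeasurableSet S :=
    (isClosed_le continuous_const (continuous_id.sub continuous_const).abs).measurableSet
  have hmaj := integrable_add_mul_abs_sub_rpow_neg (M := M) (by linarith) hc (half_pos hσ0) (r / σ)
  calc ∫ η in S, (1 + |r - σ * η|) ^ (-M) * exp (-η ^ 2 / 2)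
      ≤ ∫ η in S, ((1 + r) / 4 + σ / 2 * |η - r / σ|) ^ (-M) :=
        integral_mono_of_nonneg (ae_of_all _ fun _ ↦ by positivity) hmaj.integrableOn
          ((ae_restrict_iff' hS).2 (ae_of_all _ fun _ hη ↦
            one_add_abs_sub_rpow_neg_mul_exp_le (by linarith) hr.le hσ0 hη))
    _ ≤ ∫ η, ((1 + r) / 4 + σ / 2 * |η - r / σ|) ^ (-M) :=
        setIntegral_le_integral hmaj (ae_of_all _ fun _ ↦ by positivity)
    _ = 2 * (σ / 2)⁻¹ * ((1 + r) / 4) ^ (1 - M) / (M - 1) :=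
        integral_add_mul_abs_sub_rpow_neg (by linarith) hc (half_pos hσ0) _
    _ = 4 ^ M / (M - 1) * σ⁻¹ * (1 + r) ^ (1 - M) := by
      rw [div_rpow (by positivity) (by norm_num), rpow_sub (by norm_num : (0:ℝ) < 4), rpow_one]
      field_simp
      ring
end

section
/- Let (a_j)_{j∈ℕ} be a sequence of nonnegative real numbers for which there exist constants c₁ > 0 and C₀ > 0 such that for every R ≥ 0 the set {j ∈ ℕ : a_j ≤ R} is finite with | #{j : a_j ≤ R} − c₁ R² | ≤ C₀(1 + R). Then there exists a constant C > 0 (depending only on c₁ and C₀) such that for every ξ ∈ ℝ: ∑_{j∈ℕ} (1 + |a_j − ξ|)^{−3} ≤ C (1 + |ξ|). -/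
/-!
Differencing the Weyl law at `t + 1` and `t - 1` shows that every window `[t, t + 1]` contains
`O(1 + |t|)` of the `a j`. The `a j` with `⌊|a j - ξ|⌋₊ = k` lie in two such windows at distance
about `k` from `ξ`, so there are `O((1 + |ξ|)(1 + k))` of them, each contributing at most
`(1 + k)⁻³`; summing over `k` leaves `(1 + |ξ|) ∑ (1 + k)⁻² = (1 + |ξ|) π² / 6` up to a constant.
-/

open Real Set

theorem ncard_window_le_of_weyl_law {ι : Type*} (a : ι → ℝ) (c C₀ : ℝ)
    (hcount : ∀ R : ℝ, 0 ≤ R → {j | a j ≤ R}.Finite ∧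
      |({j | a j ≤ R}.ncard : ℝ) - c * R ^ 2| ≤ C₀ * (1 + R)) (t : ℝ) :
    {j | a j ∈ Icc t (t + 1)}.Finite ∧
      ({j | a j ∈ Icc t (t + 1)}.ncard : ℝ) ≤ (4 * |c| + 3 * C₀) * (1 + |t|) := by
  have hC₀ : 0 ≤ C₀ := by simpa using (abs_nonneg _).trans (hcount 0 le_rfl).2
  have hc : c ≤ |c| := le_abs_self c
  rcases le_or_gt t 1 with ht | ht
  · obtain ⟨hfin, hN⟩ := hcount 2 (by norm_num)
    have hsub : {j | a j ∈ Icc t (t + 1)} ⊆ {j | a j ≤ 2} :=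
      fun j hj => hj.2.trans (by linarith)
    have hle : ({j | a j ∈ Icc t (t + 1)}.ncard : ℝ) ≤ {j | a j ≤ 2}.ncard := by
      exact_mod_cast ncard_le_ncard hsub hfin
    refine ⟨hfin.subset hsub, ?_⟩
    nlinarith [(abs_le.1 hN).2, abs_nonneg c, abs_nonneg t]
  · obtain ⟨hfin, hN⟩ := hcount (t + 1) (by linarith)
    obtain ⟨-, hN'⟩ := hcount (t - 1) (by linarith)
    have hmono : {j | a j ≤ t - 1} ⊆ {j | a j ≤ t + 1} :=
      fun j (hj : a j ≤ t - 1) => hj.trans (by linarith)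
    have hsub : {j | a j ∈ Icc t (t + 1)} ⊆ {j | a j ≤ t + 1} \ {j | a j ≤ t - 1} :=
      fun j hj => ⟨hj.2, fun h => by linarith [hj.1, show a j ≤ t - 1 from h]⟩
    have hsplit := ncard_sdiff_add_ncard_of_subset hmono hfin
    have hle : ({j | a j ∈ Icc t (t + 1)}.ncard : ℝ)
        ≤ {j | a j ≤ t + 1}.ncard - {j | a j ≤ t - 1}.ncard := by
      rw [le_sub_iff_add_le]
      exact_mod_cast hsplit ▸ Nat.add_le_add_right (ncard_le_ncard hsub hfin.sdiff) _
    refine ⟨hfin.sdiff.subset hsub, ?_⟩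
    rw [abs_of_pos (by linarith : 0 < t)]
    nlinarith [(abs_le.1 hN).2, (abs_le.1 hN').1, abs_nonneg c,
      mul_le_mul_of_nonneg_right hc (by linarith : 0 ≤ t)]

theorem summable_and_tsum_le_of_fiberwise_sum_le {ι : Type*} {f : ι → ℝ} (hf : 0 ≤ f)
    (p : ι → ℕ) {g : ℕ → ℝ} (hg : Summable g)
    (hfiber : ∀ k (s : Finset ι), (∀ j ∈ s, p j = k) → ∑ j ∈ s, f j ≤ g k) :
    Summable f ∧ ∑' j, f j ≤ ∑' k, g k := by
  classical
  have hg₀ : 0 ≤ g := fun k => by simpa using hfiber k ∅ (by simp)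
  have hsum : ∀ s : Finset ι, ∑ j ∈ s, f j ≤ ∑' k, g k := fun s =>
    calc ∑ j ∈ s, f j = ∑ k ∈ s.image p, ∑ j ∈ s with p j = k, f j :=
          (Finset.sum_fiberwise_of_maps_to (fun j hj => Finset.mem_image_of_mem p hj) f).symm
      _ ≤ ∑ k ∈ s.image p, g k :=
          Finset.sum_le_sum fun k _ => hfiber k _ fun j hj => (Finset.mem_filter.1 hj).2
      _ ≤ ∑' k, g k := hg.sum_le_tsum _ fun k _ => hg₀ k
  exact ⟨summable_of_sum_le hf hsum, Real.tsum_le_of_sum_le hf hsum⟩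

theorem hasSum_one_div_nat_add_one_sq :
    HasSum (fun k : ℕ => 1 / ((k : ℝ) + 1) ^ 2) (π ^ 2 / 6) := by
  simpa using (hasSum_nat_add_iff' 1).2 hasSum_zeta_two

theorem mem_Icc_of_floor_abs_sub_eq {x ξ : ℝ} {k : ℕ} (h : ⌊|x - ξ|⌋₊ = k) :
    x ∈ Icc (ξ + k) (ξ + k + 1) ∨ x ∈ Icc (ξ - (k + 1)) (ξ - (k + 1) + 1) := by
  obtain ⟨hk, hk'⟩ := (Nat.floor_eq_iff (abs_nonneg _)).1 h
  rcases le_or_gt ξ x with hx | hx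
  · rw [abs_of_nonneg (by linarith)] at hk hk'
    exact Or.inl ⟨by linarith, by linarith⟩
  · rw [abs_of_neg (by linarith)] at hk hk'
    exact Or.inr ⟨by linarith, by linarith⟩

theorem rpow_neg_three_le_of_floor_abs_eq {x : ℝ} {k : ℕ} (h : ⌊|x|⌋₊ = k) :
    (1 + |x|) ^ (-3 : ℝ) ≤ 1 / ((k : ℝ) + 1) ^ 3 := by
  have hk : (k : ℝ) ≤ |x| := h ▸ Nat.floor_le (abs_nonneg x)
  rw [rpow_neg (by positivity), one_div, show (3 : ℝ) = (3 : ℕ) by norm_num, rpow_natCast]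
  exact inv_anti₀ (by positivity) (pow_le_pow_left₀ (by positivity) (by linarith) 3)

section WindowCount

variable {ι : Type*} (a : ι → ℝ) {K : ℝ}

theorem ncard_floor_abs_sub_eq_le
    (hwin : ∀ t, {j | a j ∈ Icc t (t + 1)}.Finite ∧
      ({j | a j ∈ Icc t (t + 1)}.ncard : ℝ) ≤ K * (1 + |t|)) (ξ : ℝ) (k : ℕ) :
    {j | ⌊|a j - ξ|⌋₊ = k}.Finite ∧
      ({j | ⌊|a j - ξ|⌋₊ = k}.ncard : ℝ) ≤ 3 * K * (1 + |ξ|) * ((k : ℝ) + 1) := by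
  obtain ⟨hfin, hle⟩ := hwin (ξ + k)
  obtain ⟨hfin', hle'⟩ := hwin (ξ - (k + 1))
  have hK : 0 ≤ K := by simpa using (Nat.cast_nonneg _).trans (hwin 0).2
  have hsub : {j | ⌊|a j - ξ|⌋₊ = k} ⊆
      {j | a j ∈ Icc (ξ + k) (ξ + k + 1)} ∪ {j | a j ∈ Icc (ξ - (k + 1)) (ξ - (k + 1) + 1)} :=
    fun j hj => mem_Icc_of_floor_abs_sub_eq hj
  have hcard : ({j | ⌊|a j - ξ|⌋₊ = k}.ncard : ℝ) ≤
      {j | a j ∈ Icc (ξ + k) (ξ + k + 1)}.ncard +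
        {j | a j ∈ Icc (ξ - (k + 1)) (ξ - (k + 1) + 1)}.ncard := by
    exact_mod_cast (ncard_le_ncard hsub (hfin.union hfin')).trans (ncard_union_le _ _)
  have habs : |ξ + k| ≤ |ξ| + k := (abs_add_le _ _).trans (by simp)
  have habs' : |ξ - (k + 1)| ≤ |ξ| + (k + 1) :=
    (abs_sub _ _).trans (by rw [abs_of_nonneg (by positivity : (0 : ℝ) ≤ k + 1)])
  refine ⟨(hfin.union hfin').subset hsub, ?_⟩
  nlinarith [mul_le_mul_of_nonneg_left habs hK, mul_le_mul_of_nonneg_left habs' hK,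
    mul_nonneg (mul_nonneg hK (abs_nonneg ξ)) (Nat.cast_nonneg k : (0 : ℝ) ≤ k),
    mul_nonneg hK (abs_nonneg ξ), mul_nonneg hK (Nat.cast_nonneg k : (0 : ℝ) ≤ k)]

theorem summable_and_tsum_le_of_window_count
    (hwin : ∀ t, {j | a j ∈ Icc t (t + 1)}.Finite ∧
      ({j | a j ∈ Icc t (t + 1)}.ncard : ℝ) ≤ K * (1 + |t|)) (ξ : ℝ) :
    Summable (fun j => (1 + |a j - ξ|) ^ (-3 : ℝ)) ∧
      ∑' j, (1 + |a j - ξ|) ^ (-3 : ℝ) ≤ K * π ^ 2 / 2 * (1 + |ξ|) := by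
  set A := 3 * K * (1 + |ξ|)
  have hfiber : ∀ k (s : Finset ι), (∀ j ∈ s, ⌊|a j - ξ|⌋₊ = k) →
      ∑ j ∈ s, (1 + |a j - ξ|) ^ (-3 : ℝ) ≤ A * (1 / ((k : ℝ) + 1) ^ 2) := by
    intro k s hs
    obtain ⟨hfin, hcard⟩ := ncard_floor_abs_sub_eq_le a hwin ξ k
    have hs_card : (s.card : ℝ) ≤ {j | ⌊|a j - ξ|⌋₊ = k}.ncard := by
      rw [← ncard_coe_finset]
      exact_mod_cast ncard_le_ncard (fun j hj => hs j hj) hfin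
    calc ∑ j ∈ s, (1 + |a j - ξ|) ^ (-3 : ℝ) ≤ ∑ _j ∈ s, 1 / ((k : ℝ) + 1) ^ 3 :=
          Finset.sum_le_sum fun j hj => rpow_neg_three_le_of_floor_abs_eq (hs j hj)
      _ = s.card * (1 / ((k : ℝ) + 1) ^ 3) := by rw [Finset.sum_const, nsmul_eq_mul]
      _ ≤ A * ((k : ℝ) + 1) * (1 / ((k : ℝ) + 1) ^ 3) := by gcongr; exact hs_card.trans hcard
      _ = A * (1 / ((k : ℝ) + 1) ^ 2) := by field_simp
  have hζ := hasSum_one_div_nat_add_one_sq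
  obtain ⟨hsum, hle⟩ := summable_and_tsum_le_of_fiberwise_sum_le
    (fun j => by positivity) (fun j => ⌊|a j - ξ|⌋₊) (hζ.summable.mul_left A) hfiber
  refine ⟨hsum, hle.trans_eq ?_⟩
  rw [tsum_mul_left, hζ.tsum_eq]
  ring

end WindowCount

theorem shifted_sum_bound_general
    (a : ℕ → ℝ)
    (c₁ C₀ : ℝ) (hC₀ : 0 < C₀)
    (hcount : ∀ R : ℝ, 0 ≤ R → {j : ℕ | a j ≤ R}.Finite ∧
      |({j : ℕ | a j ≤ R}.ncard : ℝ) - c₁ * R ^ 2| ≤ C₀ * (1 + R)) :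
    ∃ C : ℝ, 0 < C ∧ ∀ ξ : ℝ,
      Summable (fun j : ℕ => (1 + |a j - ξ|) ^ (-3 : ℝ)) ∧
      ∑' j : ℕ, (1 + |a j - ξ|) ^ (-3 : ℝ) ≤ C * (1 + |ξ|) :=
  ⟨(4 * |c₁| + 3 * C₀) * π ^ 2 / 2, by positivity,
    summable_and_tsum_le_of_window_count a (ncard_window_le_of_weyl_law a c₁ C₀ hcount)⟩

/-- Under a two-sided Weyl law `#{j : a_j ≤ R} = c₁R² + O(1+R)`,
the shifted sum `∑ (1+|a_j−ξ|)^{−3}` is `O(1+|ξ|)` uniformly in `ξ`. -/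
theorem shifted_sum_bound
    (a : ℕ → ℝ) (ha : ∀ j, 0 ≤ a j)
    (c₁ C₀ : ℝ) (hc₁ : 0 < c₁) (hC₀ : 0 < C₀)
    (hcount : ∀ R : ℝ, 0 ≤ R → {j : ℕ | a j ≤ R}.Finite ∧
      |({j : ℕ | a j ≤ R}.ncard : ℝ) - c₁ * R ^ 2| ≤ C₀ * (1 + R)) :
    ∃ C : ℝ, 0 < C ∧ ∀ ξ : ℝ,
      Summable (fun j : ℕ => (1 + |a j - ξ|) ^ (-3 : ℝ)) ∧
      ∑' j : ℕ, (1 + |a j - ξ|) ^ (-3 : ℝ) ≤ C * (1 + |ξ|) :=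
  shifted_sum_bound_general a c₁ C₀ hC₀ hcount
end

section
/- For each integer m ≥ 1 set x_m = 2m² − 1 + 2m·√(m² − 1). Then there exist constants c > 0, C > 0 and t₀ ≥ 1 such that for all t ≥ t₀: c·e^{t/2} ≤ #{ m ∈ ℕ, m ≥ 1 : |log x_m − t| ≤ 1/2 } ≤ C·e^{t/2}. -/
/-!
Write `x_m = λ_m²` with `λ_m = m + √(m² - 1)`. Since `2m - 1 ≤ λ_m ≤ 2m`, the condition
`|log x_m - t| ≤ 1/2`, i.e. `e^{t/2 - 1/4} ≤ λ_m ≤ e^{t/2 + 1/4}`, forces `m ≤ e^{t/2 + 1/4}`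
and holds for every `m` in `[(e^{t/2 - 1/4} + 1)/2, e^{t/2 + 1/4}/2]`, an interval of length
`sinh(1/4) e^{t/2} - 1/2`.
-/

open Real Set

lemma Nat.ncard_Icc_one_floor_le {β : ℝ} (hβ : 0 ≤ β) : ((Icc 1 ⌊β⌋₊).ncard : ℝ) ≤ β := by
  rw [Set.ncard_Icc_nat, Nat.add_sub_cancel]
  exact Nat.floor_le hβ

lemma Nat.sub_sub_one_le_ncard_Icc_ceil_floor {α β : ℝ} (hα : 0 ≤ α) :
    β - α - 1 ≤ ((Icc ⌈α⌉₊ ⌊β⌋₊).ncard : ℝ) := by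
  have hceil : (⌈α⌉₊ : ℝ) < α + 1 := Nat.ceil_lt_add_one hα
  have hfloor : β < ⌊β⌋₊ + 1 := Nat.lt_floor_add_one β
  rw [Set.ncard_Icc_nat]
  rcases le_total ⌈α⌉₊ (⌊β⌋₊ + 1) with hle | hlt
  · push_cast [Nat.cast_sub hle]
    linarith
  · have hαβ : ((⌊β⌋₊ + 1 : ℕ) : ℝ) ≤ ⌈α⌉₊ := by exact_mod_cast hlt
    push_cast at hαβ
    rw [Nat.sub_eq_zero_of_le hlt, Nat.cast_zero]
    linarith

lemma Real.abs_log_sub_le_iff {x t r : ℝ} (hx : 0 < x) :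
    |log x - t| ≤ r ↔ exp (t - r) ≤ x ∧ x ≤ exp (t + r) := by
  rw [abs_sub_le_iff, sub_le_iff_le_add, sub_le_comm, log_le_iff_le_exp hx,
    le_log_iff_exp_le hx, add_comm r, and_comm]

/-- The larger eigenvalue of a hyperbolic element of trace `2m`; `x_m` is its square. -/
noncomputable def traceEigenvalue (m : ℕ) : ℝ := m + √((m : ℝ) ^ 2 - 1)

noncomputable def lengthWindow (t : ℝ) : Set ℕ :=
  {m | 1 ≤ m ∧ |log (2 * (m : ℝ) ^ 2 - 1 + 2 * m * √((m : ℝ) ^ 2 - 1)) - t| ≤ 1 / 2}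

section traceEigenvalue

variable {m : ℕ}

lemma traceEigenvalue_sq (hm : 1 ≤ m) :
    traceEigenvalue m ^ 2 = 2 * (m : ℝ) ^ 2 - 1 + 2 * m * √((m : ℝ) ^ 2 - 1) := by
  have hm' : (1 : ℝ) ≤ m := by exact_mod_cast hm
  have hsq : √((m : ℝ) ^ 2 - 1) ^ 2 = (m : ℝ) ^ 2 - 1 := sq_sqrt (by nlinarith)
  rw [traceEigenvalue]
  linear_combination hsq

lemma two_mul_sub_one_le_traceEigenvalue (hm : 1 ≤ m) : 2 * (m : ℝ) - 1 ≤ traceEigenvalue m := by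
  have hm' : (1 : ℝ) ≤ m := by exact_mod_cast hm
  have hsqrt : (m : ℝ) - 1 ≤ √((m : ℝ) ^ 2 - 1) :=
    le_sqrt_of_sq_le (by nlinarith)
  rw [traceEigenvalue]
  linarith

lemma traceEigenvalue_le_two_mul (m : ℕ) : traceEigenvalue m ≤ 2 * m := by
  have hsqrt : √((m : ℝ) ^ 2 - 1) ≤ m :=
    (sqrt_le_sqrt (by linarith)).trans_eq (sqrt_sq m.cast_nonneg)
  rw [traceEigenvalue]
  linarith

lemma traceEigenvalue_pos (hm : 1 ≤ m) : 0 < traceEigenvalue m := by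
  have hm' : (1 : ℝ) ≤ m := by exact_mod_cast hm
  linarith [two_mul_sub_one_le_traceEigenvalue hm]

end traceEigenvalue

section lengthWindow

variable {t : ℝ}

lemma mem_lengthWindow_iff {m : ℕ} :
    m ∈ lengthWindow t ↔
      1 ≤ m ∧ exp (t / 2 - 1 / 4) ≤ traceEigenvalue m ∧ traceEigenvalue m ≤ exp (t / 2 + 1 / 4) := by
  refine and_congr_right fun hm => ?_
  have hpos := traceEigenvalue_pos hm
  have hexp (s : ℝ) : exp (2 * s) = exp s ^ 2 := by rw [← exp_nat_mul]; norm_num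
  rw [← traceEigenvalue_sq hm, abs_log_sub_le_iff (by positivity),
    show t - 1 / 2 = 2 * (t / 2 - 1 / 4) by ring, show t + 1 / 2 = 2 * (t / 2 + 1 / 4) by ring,
    hexp, hexp, pow_le_pow_iff_left₀ (exp_pos _).le hpos.le two_ne_zero,
    pow_le_pow_iff_left₀ hpos.le (exp_pos _).le two_ne_zero]

lemma lengthWindow_subset_Icc (t : ℝ) : lengthWindow t ⊆ Icc 1 ⌊exp (t / 2 + 1 / 4)⌋₊ := by
  intro m hm
  obtain ⟨hm1, -, hle⟩ := mem_lengthWindow_iff.mp hm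
  have hm' : (1 : ℝ) ≤ m := by exact_mod_cast hm1
  have := two_mul_sub_one_le_traceEigenvalue hm1
  exact ⟨hm1, Nat.le_floor (by linarith)⟩

lemma Icc_subset_lengthWindow (t : ℝ) :
    Icc ⌈(exp (t / 2 - 1 / 4) + 1) / 2⌉₊ ⌊exp (t / 2 + 1 / 4) / 2⌋₊ ⊆ lengthWindow t := by
  rintro m ⟨hlo, hhi⟩
  have hm1 : 1 ≤ m := (Nat.one_le_ceil_iff.mpr (by positivity)).trans hlo
  have hlo' : (exp (t / 2 - 1 / 4) + 1) / 2 ≤ m := Nat.ceil_le.mp hlo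
  have hhi' : (m : ℝ) ≤ exp (t / 2 + 1 / 4) / 2 := Nat.le_floor_iff (by positivity) |>.mp hhi
  refine mem_lengthWindow_iff.mpr ⟨hm1, ?_, ?_⟩
  · linarith [two_mul_sub_one_le_traceEigenvalue hm1]
  · linarith [traceEigenvalue_le_two_mul m]

lemma lengthWindow_finite (t : ℝ) : (lengthWindow t).Finite :=
  (finite_Icc _ _).subset (lengthWindow_subset_Icc t)

lemma ncard_lengthWindow_le (t : ℝ) : ((lengthWindow t).ncard : ℝ) ≤ exp (1 / 4) * exp (t / 2) :=
  calc ((lengthWindow t).ncard : ℝ)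
      ≤ (Icc 1 ⌊exp (t / 2 + 1 / 4)⌋₊).ncard := by
        exact_mod_cast ncard_le_ncard (lengthWindow_subset_Icc t) (finite_Icc _ _)
    _ ≤ exp (t / 2 + 1 / 4) := Nat.ncard_Icc_one_floor_le (exp_pos _).le
    _ = exp (1 / 4) * exp (t / 2) := by rw [← exp_add, add_comm]

lemma sinh_mul_exp_sub_le_ncard_lengthWindow (t : ℝ) :
    sinh (1 / 4) * exp (t / 2) - 3 / 2 ≤ ((lengthWindow t).ncard : ℝ) :=
  calc sinh (1 / 4) * exp (t / 2) - 3 / 2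
      = exp (t / 2 + 1 / 4) / 2 - (exp (t / 2 - 1 / 4) + 1) / 2 - 1 := by
        rw [sinh_eq, sub_eq_add_neg (t / 2), exp_add, exp_add]
        ring
    _ ≤ (Icc ⌈(exp (t / 2 - 1 / 4) + 1) / 2⌉₊ ⌊exp (t / 2 + 1 / 4) / 2⌋₊).ncard :=
        Nat.sub_sub_one_le_ncard_Icc_ceil_floor (by positivity)
    _ ≤ (lengthWindow t).ncard := by
        exact_mod_cast ncard_le_ncard (Icc_subset_lengthWindow t) (lengthWindow_finite t)

end lengthWindow

/-- Counting the arithmetic lengths `log x_m`, `x_m = 2m²−1+2m√(m²−1)`, in a unit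
window around `t`: the count is comparable to `e^{t/2}` for `t` large. -/
theorem arithmetic_length_count :
    ∃ c C t₀ : ℝ, 0 < c ∧ 0 < C ∧ 1 ≤ t₀ ∧ ∀ t : ℝ, t₀ ≤ t →
      {m : ℕ | 1 ≤ m ∧
        |Real.log (2 * (m : ℝ) ^ 2 - 1 + 2 * m * Real.sqrt ((m : ℝ) ^ 2 - 1)) - t|
          ≤ 1 / 2}.Finite ∧
      c * Real.exp (t / 2) ≤
        ({m : ℕ | 1 ≤ m ∧
          |Real.log (2 * (m : ℝ) ^ 2 - 1 + 2 * m * Real.sqrt ((m : ℝ) ^ 2 - 1)) - t|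
            ≤ 1 / 2}.ncard : ℝ) ∧
      ({m : ℕ | 1 ≤ m ∧
          |Real.log (2 * (m : ℝ) ^ 2 - 1 + 2 * m * Real.sqrt ((m : ℝ) ^ 2 - 1)) - t|
            ≤ 1 / 2}.ncard : ℝ) ≤ C * Real.exp (t / 2) := by
  refine ⟨1 / 8, exp (1 / 4), 8, by norm_num, exp_pos _, by norm_num, fun t ht => ?_⟩
  refine ⟨lengthWindow_finite t, ?_, ncard_lengthWindow_le t⟩
  show 1 / 8 * exp (t / 2) ≤ ((lengthWindow t).ncard : ℝ)
  have h12 : 12 ≤ exp (t / 2) := by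
    have := quadratic_le_exp_of_nonneg (x := t / 2) (by linarith)
    nlinarith
  have hsinh : 1 / 4 * exp (t / 2) ≤ sinh (1 / 4) * exp (t / 2) :=
    mul_le_mul_of_nonneg_right (self_le_sinh_iff.mpr (by norm_num)) (exp_pos _).le
  linarith [sinh_mul_exp_sub_le_ncard_lengthWindow t]
end

section
/- Let (r_j)_{j∈ℕ} be a sequence of complex numbers with Im r_j ≥ 0 for all j, and suppose there is a constant C₀ > 0 such that for every R ≥ 0 the set {j : |Re r_j| ≤ R} is finite with cardinality at most C₀(1 + R²). Let φ : ℝ → ℂ be infinitely differentiable with support contained in (−1,1), and let A > 0. Then there exists a constant C > 0 (depending only on C₀, φ, A) such that for all ε ∈ (0,1) and all d > 1, setting g(s) = φ((s−d)/ε) + φ((−s−d)/ε) and ĝ(r) = ∫_ℝ e^{−irs} g(s) ds, one has ∑_{j : Im r_j < A} |ĝ(r_j)| ≤ C ε^{−1} e^{(d+ε)A}. -/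
open Complex Real MeasureTheory Function Set

noncomputable def FL (ψ : ℝ → ℂ) (z : ℂ) : ℂ := ∫ t : ℝ, Complex.exp (-Complex.I * z * t) * ψ t

lemma norm_cexp_aux (z : ℂ) (t : ℝ) : ‖Complex.exp (-Complex.I * z * t)‖ = Real.exp (z.im * t) := by
  rw [Complex.norm_exp]
  congr 1
  simp [Complex.mul_re, Complex.mul_im]

lemma supp_compact {ψ : ℝ → ℂ} (hs : support ψ ⊆ Icc (-1:ℝ) 1) : HasCompactSupport ψ :=
  HasCompactSupport.intro isCompact_Icc (fun x hx => by
    by_contra h; exact hx (hs h))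

lemma FL_integrable {ψ : ℝ → ℂ} (hc : Continuous ψ) (hs : support ψ ⊆ Icc (-1:ℝ) 1) (z : ℂ) :
    Integrable (fun t : ℝ => Complex.exp (-Complex.I * z * t) * ψ t) :=
  Continuous.integrable_of_hasCompactSupport (by continuity) ((supp_compact hs).mul_left)

-- basic bound
lemma FL_bound {ψ : ℝ → ℂ} (hc : Continuous ψ) (hs : support ψ ⊆ Icc (-1:ℝ) 1)
    {M : ℝ} (hM : ∀ t, ‖ψ t‖ ≤ M) (z : ℂ) :
    ‖FL ψ z‖ ≤ 4 * M * Real.exp |z.im| := by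
  have hM0 : 0 ≤ M := le_trans (norm_nonneg _) (hM 0)
  have hsupp2 : support (fun t : ℝ => Complex.exp (-Complex.I * z * t) * ψ t) ⊆ Ioc (-2:ℝ) 2 := by
    intro t ht
    have : ψ t ≠ 0 := fun h => ht (by simp [Function.mem_support] at ht ⊢; tauto)
    have := hs this
    constructor <;> [linarith [this.1]; linarith [this.2]]
  rw [FL, ← intervalIntegral.integral_eq_integral_of_support_subset hsupp2]
  have : (2:ℝ) - (-2) = 4 := by norm_num
  calc ‖∫ t in (-2:ℝ)..2, Complex.exp (-Complex.I * z * t) * ψ t‖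
      ≤ M * Real.exp |z.im| * |2 - (-2:ℝ)| := by
        apply intervalIntegral.norm_integral_le_of_norm_le_const
        intro t ht
        rw [Set.uIoc_of_le (by norm_num)] at ht
        by_cases hψ : ψ t = 0
        · simp [hψ]; positivity
        · have htm := hs hψ
          rw [norm_mul, norm_cexp_aux]
          have h1 : Real.exp (z.im * t) ≤ Real.exp |z.im| := by
            apply Real.exp_le_exp.2
            calc z.im * t ≤ |z.im * t| := le_abs_self _
            _ = |z.im| * |t| := abs_mul _ _
            _ ≤ |z.im| * 1 := by
                apply mul_le_mul_of_nonneg_left _ (abs_nonneg _)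
                rw [abs_le]; exact ⟨htm.1, htm.2⟩
            _ = |z.im| := mul_one _
          calc Real.exp (z.im * t) * ‖ψ t‖ ≤ Real.exp |z.im| * M :=
                mul_le_mul h1 (hM t) (norm_nonneg _) (Real.exp_pos _).le
          _ = M * Real.exp |z.im| := mul_comm _ _
    _ = 4 * M * Real.exp |z.im| := by rw [show |2-(-2:ℝ)| = 4 by norm_num]; ring

lemma deriv_supp {ψ : ℝ → ℂ} (hs : support ψ ⊆ Icc (-1:ℝ) 1) :
    support (deriv ψ) ⊆ Icc (-1:ℝ) 1 := by
  refine subset_trans support_deriv_subset ?_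
  rw [tsupport]
  calc closure (support ψ) ⊆ closure (Icc (-1:ℝ) 1) := closure_mono hs
  _ = Icc (-1:ℝ) 1 := isClosed_Icc.closure_eq

lemma FL_deriv {ψ : ℝ → ℂ} (hψ : ContDiff ℝ (⊤:ℕ∞) ψ) (hs : support ψ ⊆ Icc (-1:ℝ) 1) (z : ℂ) :
    FL (deriv ψ) z = Complex.I * z * FL ψ z := by
  have hψd : Differentiable ℝ ψ := hψ.differentiable (by simp)
  have hdc : Continuous (deriv ψ) := hψ.continuous_deriv (by exact_mod_cast le_top)
  set F : ℝ → ℂ := fun t => Complex.exp (-Complex.I * z * t) * ψ t with hF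
  set F' : ℝ → ℂ := fun t => Complex.exp (-Complex.I * z * t) * deriv ψ t +
      (-Complex.I * z) * (Complex.exp (-Complex.I * z * t) * ψ t) with hF'
  have hder : ∀ t : ℝ, HasDerivAt F (F' t) t := by
    intro t
    have h1 : HasDerivAt (fun t : ℝ => -Complex.I * z * t) (-Complex.I * z) t := by
      simpa using (Complex.ofRealCLM.hasDerivAt (x := t)).const_mul (-Complex.I * z)
    have h2 := h1.cexp
    have h3 := h2.mul (hψd t).hasDerivAt
    refine h3.congr_deriv ?_
    simp [hF']
    ring
  have hzero : ∫ t : ℝ, F' t = 0 := by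
    have hsupp : support F' ⊆ Ioc (-2:ℝ) 2 := by
      intro t ht
      simp only [Function.mem_support, hF'] at ht
      have : ψ t ≠ 0 ∨ deriv ψ t ≠ 0 := by
        by_contra h
        push_neg at h
        apply ht
        rw [h.1, h.2]
        ring
      have htm : t ∈ Icc (-1:ℝ) 1 := by
        rcases this with h | h
        · exact hs h
        · exact deriv_supp hs h
      constructor <;> [linarith [htm.1]; linarith [htm.2]]
    rw [← intervalIntegral.integral_eq_integral_of_support_subset hsupp]
    have hce : Continuous fun t : ℝ => Complex.exp (-Complex.I * z * t) := by continuity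
    have hint : IntervalIntegrable F' volume (-2) 2 :=
      ((hce.mul hdc).add (continuous_const.mul (hce.mul hψ.continuous))).intervalIntegrable _ _
    rw [intervalIntegral.integral_eq_sub_of_hasDerivAt (fun x _ => hder x) hint]
    have e2 : ψ 2 = 0 := by
      by_contra h; have := hs h; simp at this
    have em2 : ψ (-2) = 0 := by
      by_contra h; have := hs h; simp at this
    simp [hF, e2, em2]
  have hi1 := FL_integrable hdc (deriv_supp hs) z
  have hi2 := FL_integrable hψ.continuous hs z
  have : ∫ t : ℝ, F' t = FL (deriv ψ) z + (-Complex.I * z) * FL ψ z := by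
    rw [hF']
    rw [integral_add hi1 (hi2.const_mul _)]
    rw [MeasureTheory.integral_const_mul]
    rfl
  rw [this] at hzero
  linear_combination hzero

lemma iter_facts {φ : ℝ → ℂ} (hφ : ContDiff ℝ (⊤:ℕ∞) φ) (hs : support φ ⊆ Icc (-1:ℝ) 1) (n : ℕ) :
    ContDiff ℝ (⊤:ℕ∞) (iteratedDeriv n φ) ∧ support (iteratedDeriv n φ) ⊆ Icc (-1:ℝ) 1 := by
  induction n generalizing φ with
  | zero => simpa [iteratedDeriv_zero] using ⟨hφ, hs⟩
  | succ n ih =>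
    have h1 : ContDiff ℝ (⊤:ℕ∞) (deriv φ) := (contDiff_infty_iff_deriv.mp hφ).2
    have := ih h1 (deriv_supp hs)
    simpa [iteratedDeriv_succ'] using this

lemma FL_iter {φ : ℝ → ℂ} (hφ : ContDiff ℝ (⊤:ℕ∞) φ) (hs : support φ ⊆ Icc (-1:ℝ) 1) (n : ℕ)
    (z : ℂ) : FL (iteratedDeriv n φ) z = (Complex.I * z) ^ n * FL φ z := by
  induction n generalizing φ with
  | zero => simp [iteratedDeriv_zero]
  | succ n ih =>
    have h1 : ContDiff ℝ (⊤:ℕ∞) (deriv φ) := (contDiff_infty_iff_deriv.mp hφ).2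
    rw [iteratedDeriv_succ', ih h1 (deriv_supp hs), FL_deriv hφ hs]
    ring

lemma FL_decay {φ : ℝ → ℂ} (hφ : ContDiff ℝ (⊤:ℕ∞) φ) (hs : support φ ⊆ Icc (-1:ℝ) 1) :
    ∃ B : ℝ, 0 < B ∧ ∀ z : ℂ, ‖FL φ z‖ ≤ B * ((1 + |z.re|) ^ 4)⁻¹ * Real.exp |z.im| := by
  obtain ⟨M₀, hM₀⟩ := (supp_compact hs).exists_bound_of_continuous hφ.continuous
  set ψ := iteratedDeriv 4 φ with hψdef
  obtain ⟨hψc, hψs⟩ := iter_facts hφ hs 4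
  obtain ⟨M₄, hM₄⟩ := (supp_compact hψs).exists_bound_of_continuous hψc.continuous
  have hM₀0 : 0 ≤ M₀ := le_trans (norm_nonneg _) (hM₀ 0)
  have hM₄0 : 0 ≤ M₄ := le_trans (norm_nonneg _) (hM₄ 0)
  refine ⟨64 * (M₀ + M₄) + 1, by positivity, fun z => ?_⟩
  have b0 : ‖FL φ z‖ ≤ 4 * M₀ * Real.exp |z.im| := FL_bound hφ.continuous hs hM₀ z
  have b4 : ‖z‖ ^ 4 * ‖FL φ z‖ ≤ 4 * M₄ * Real.exp |z.im| := by
    have := FL_bound hψc.continuous hψs hM₄ z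
    rw [FL_iter hφ hs 4 z] at this
    calc ‖z‖ ^ 4 * ‖FL φ z‖ = ‖(Complex.I * z) ^ 4 * FL φ z‖ := by
          rw [norm_mul, norm_pow, norm_mul, Complex.norm_I, one_mul]
    _ ≤ 4 * M₄ * Real.exp |z.im| := this
  have hre : |z.re| ≤ ‖z‖ := Complex.abs_re_le_norm z
  have hre0 : (0:ℝ) ≤ |z.re| := abs_nonneg _
  have habs0 : (0:ℝ) ≤ ‖z‖ := norm_nonneg z
  have hpow : (1 + |z.re|) ^ 4 ≤ 16 * (1 + ‖z‖ ^ 4) := by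
    nlinarith [sq_nonneg (‖z‖), sq_nonneg (1 - ‖z‖),
      sq_nonneg (‖z‖ ^ 2 - ‖z‖), sq_nonneg (‖z‖ - 1),
      sq_nonneg (‖z‖ ^ 2 - 1), pow_le_pow_left₀ hre0 hre 4,
      pow_le_pow_left₀ hre0 hre 2, hre]
  have key : (1 + |z.re|) ^ 4 * ‖FL φ z‖ ≤ (64 * (M₀ + M₄) + 1) * Real.exp |z.im| := by
    have h1 : (1 + |z.re|) ^ 4 * ‖FL φ z‖ ≤ 16 * (1 + ‖z‖ ^ 4) * ‖FL φ z‖ :=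
      mul_le_mul_of_nonneg_right hpow (norm_nonneg _)
    have h2 : 16 * (1 + ‖z‖ ^ 4) * ‖FL φ z‖
        = 16 * ‖FL φ z‖ + 16 * (‖z‖ ^ 4 * ‖FL φ z‖) := by ring
    have h3 : 16 * ‖FL φ z‖ + 16 * (‖z‖ ^ 4 * ‖FL φ z‖)
        ≤ 16 * (4 * M₀ * Real.exp |z.im|) + 16 * (4 * M₄ * Real.exp |z.im|) := by
      gcongr
    have hexp : (0:ℝ) < Real.exp |z.im| := Real.exp_pos _
    nlinarith
  have hpos : (0:ℝ) < (1 + |z.re|) ^ 4 := by positivity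
  rw [show (64 * (M₀ + M₄) + 1) * ((1 + |z.re|) ^ 4)⁻¹ * Real.exp |z.im|
      = ((64 * (M₀ + M₄) + 1) * Real.exp |z.im|) / (1 + |z.re|) ^ 4 by
        rw [div_eq_mul_inv]; ring, le_div_iff₀ hpos]
  calc ‖FL φ z‖ * (1 + |z.re|) ^ 4 = (1 + |z.re|) ^ 4 * ‖FL φ z‖ := mul_comm _ _
  _ ≤ (64 * (M₀ + M₄) + 1) * Real.exp |z.im| := key

lemma cov (φ : ℝ → ℂ) {ε : ℝ} (hε : 0 < ε) (d : ℝ) (r : ℂ) :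
    ∫ s : ℝ, Complex.exp (-Complex.I * r * s) * φ ((s - d) / ε)
      = ε * (Complex.exp (-Complex.I * r * d) * FL φ (ε * r)) := by
  set G : ℝ → ℂ := fun u => Complex.exp (-Complex.I * r * ((ε * u + d : ℝ) : ℂ)) * φ u with hG
  have h1 : ∀ s : ℝ, Complex.exp (-Complex.I * r * s) * φ ((s - d) / ε)
      = (fun x : ℝ => G (x / ε)) (s - d) := by
    intro s
    simp only [hG]
    have h2 : ε * ((s - d) / ε) + d = s := by field_simp; ring
    rw [h2]
  simp only [h1]
  rw [integral_sub_right_eq_self (fun x : ℝ => G (x / ε)) d,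
    MeasureTheory.Measure.integral_comp_div G ε]
  have h3 : ∀ u : ℝ, G u = Complex.exp (-Complex.I * r * d)
      * (Complex.exp (-Complex.I * (ε * r) * u) * φ u) := by
    intro u
    simp only [hG]
    rw [← mul_assoc, ← Complex.exp_add]
    congr 2
    push_cast
    ring
  simp only [h3]
  rw [MeasureTheory.integral_const_mul]
  rw [abs_of_pos hε, Complex.real_smul]
  rfl

lemma cov2 (φ : ℝ → ℂ) {ε : ℝ} (hε : 0 < ε) (d : ℝ) (r : ℂ) :
    ∫ s : ℝ, Complex.exp (-Complex.I * r * s) * φ ((-s - d) / ε)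
      = ε * (Complex.exp (-Complex.I * (-r) * d) * FL φ (ε * (-r))) := by
  have key := MeasureTheory.integral_neg_eq_self
    (fun s : ℝ => Complex.exp (-Complex.I * (-r) * s) * φ ((s - d) / ε)) volume
  have h1 : ∀ x : ℝ, Complex.exp (-Complex.I * (-r) * ((-x : ℝ) : ℂ)) * φ ((-x - d) / ε)
      = Complex.exp (-Complex.I * r * x) * φ ((-x - d) / ε) := by
    intro x; congr 2; push_cast; ring
  rw [← cov φ hε d (-r), ← key]
  congr 1
  ext x
  push_cast
  rw [show -Complex.I * -r * -(x:ℂ) = -Complex.I * r * x by ring]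

lemma term_bound {φ : ℝ → ℂ} (hφc : Continuous φ)
    (hs : support φ ⊆ Icc (-1:ℝ) 1)
    {B : ℝ} (hB : 0 < B)
    (hdecay : ∀ z : ℂ, ‖FL φ z‖ ≤ B * ((1 + |z.re|) ^ 4)⁻¹ * Real.exp |z.im|)
    {ε : ℝ} (hε : 0 < ε) (hε1 : ε < 1) {d : ℝ} (hd : 1 < d)
    {A : ℝ} (hA : 0 < A) {r : ℂ} (h0 : 0 ≤ r.im) (hrA : r.im < A) :
    ‖∫ s : ℝ, Complex.exp (-Complex.I * r * s) *
        (φ ((s - d) / ε) + φ ((-s - d) / ε))‖ ≤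
      2 * ε * B * ((1 + ε * |r.re|) ^ 4)⁻¹ * Real.exp ((d + ε) * A) := by
  -- integrability of the two pieces
  have hcexp : Continuous fun s : ℝ => Complex.exp (-Complex.I * r * s) := by continuity
  have hcomp1 : Continuous fun s : ℝ => φ ((s - d) / ε) := hφc.comp (by continuity)
  have hcomp2 : Continuous fun s : ℝ => φ ((-s - d) / ε) := hφc.comp (by continuity)
  have hsupp1 : HasCompactSupport fun s : ℝ => φ ((s - d) / ε) := by
    apply HasCompactSupport.intro (isCompact_Icc (a := d - ε) (b := d + ε))
    intro x hx
    by_contra h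
    have hmem := hs h
    simp only [Set.mem_Icc] at hmem hx
    have h1 : -1 ≤ (x - d) / ε := hmem.1
    have h2 : (x - d) / ε ≤ 1 := hmem.2
    rw [le_div_iff₀ hε] at h1
    rw [div_le_iff₀ hε] at h2
    push_neg at hx
    rcases le_or_gt (d - ε) x with hc | hc
    · linarith [hx hc]
    · linarith
  have hsupp2 : HasCompactSupport fun s : ℝ => φ ((-s - d) / ε) := by
    apply HasCompactSupport.intro (isCompact_Icc (a := -d - ε) (b := -d + ε))
    intro x hx
    by_contra h
    have hmem := hs h
    simp only [Set.mem_Icc] at hmem hx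
    have h1 : -1 ≤ (-x - d) / ε := hmem.1
    have h2 : (-x - d) / ε ≤ 1 := hmem.2
    rw [le_div_iff₀ hε] at h1
    rw [div_le_iff₀ hε] at h2
    push_neg at hx
    rcases le_or_gt (-d - ε) x with hc | hc
    · linarith [hx hc]
    · linarith
  have hint1 : Integrable (fun s : ℝ => Complex.exp (-Complex.I * r * s) * φ ((s - d) / ε)) :=
    Continuous.integrable_of_hasCompactSupport (hcexp.mul hcomp1) hsupp1.mul_left
  have hint2 : Integrable (fun s : ℝ => Complex.exp (-Complex.I * r * s) * φ ((-s - d) / ε)) :=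
    Continuous.integrable_of_hasCompactSupport (hcexp.mul hcomp2) hsupp2.mul_left
  have hsplit : (∫ s : ℝ, Complex.exp (-Complex.I * r * s) *
      (φ ((s - d) / ε) + φ ((-s - d) / ε)))
      = (∫ s : ℝ, Complex.exp (-Complex.I * r * s) * φ ((s - d) / ε))
        + ∫ s : ℝ, Complex.exp (-Complex.I * r * s) * φ ((-s - d) / ε) := by
    rw [← integral_add hint1 hint2]
    congr 1
    ext s
    ring
  rw [hsplit, cov φ hε d r, cov2 φ hε d r]
  set w : ℝ := ((1 + ε * |r.re|) ^ 4)⁻¹ with hw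
  have hw0 : 0 ≤ w := by positivity
  have hreε : |((ε : ℂ) * r).re| = ε * |r.re| := by
    simp [Complex.mul_re, abs_mul, abs_of_pos hε]
  have himε : |((ε : ℂ) * r).im| = ε * r.im := by
    simp [Complex.mul_im]
    rw [abs_of_pos hε, abs_of_nonneg h0]
  have hreε' : |((ε : ℂ) * (-r)).re| = ε * |r.re| := by
    simp [Complex.mul_re, abs_mul, abs_of_pos hε]
  have himε' : |((ε : ℂ) * (-r)).im| = ε * r.im := by
    simp [Complex.mul_im]
    rw [abs_of_pos hε, abs_of_nonneg h0]
  have hFL1 : ‖FL φ ((ε : ℂ) * r)‖ ≤ B * w * Real.exp (ε * r.im) := by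
    have := hdecay ((ε : ℂ) * r)
    rwa [hreε, himε] at this
  have hFL2 : ‖FL φ ((ε : ℂ) * (-r))‖ ≤ B * w * Real.exp (ε * r.im) := by
    have := hdecay ((ε : ℂ) * (-r))
    rwa [hreε', himε'] at this
  have hne1 : ‖Complex.exp (-Complex.I * r * d)‖ = Real.exp (r.im * d) := norm_cexp_aux r d
  have hne2 : ‖Complex.exp (-Complex.I * (-r) * d)‖ = Real.exp (-(r.im * d)) := by
    have := norm_cexp_aux (-r) d
    simpa using this
  have key1 : ‖(ε : ℂ) * (Complex.exp (-Complex.I * r * d) * FL φ ((ε : ℂ) * r))‖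
      ≤ ε * B * w * Real.exp ((d + ε) * A) := by
    rw [norm_mul, norm_mul, hne1]
    have : ‖(ε : ℂ)‖ = ε := by
      rw [Complex.norm_real, Real.norm_eq_abs, abs_of_pos hε]
    rw [this]
    have hb : Real.exp (r.im * d) * ‖FL φ ((ε : ℂ) * r)‖
        ≤ Real.exp (r.im * d) * (B * w * Real.exp (ε * r.im)) := by
      exact mul_le_mul_of_nonneg_left hFL1 (Real.exp_pos _).le
    have he : Real.exp (r.im * d) * (B * w * Real.exp (ε * r.im))
        = B * w * Real.exp (r.im * d + ε * r.im) := by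
      rw [Real.exp_add]; ring
    have hle : Real.exp (r.im * d + ε * r.im) ≤ Real.exp ((d + ε) * A) := by
      apply Real.exp_le_exp.2
      nlinarith
    calc ε * (Real.exp (r.im * d) * ‖FL φ ((ε : ℂ) * r)‖)
        ≤ ε * (B * w * Real.exp (r.im * d + ε * r.im)) := by
          rw [← he]; exact mul_le_mul_of_nonneg_left hb hε.le
    _ ≤ ε * (B * w * Real.exp ((d + ε) * A)) := by
          apply mul_le_mul_of_nonneg_left _ hε.le
          exact mul_le_mul_of_nonneg_left hle (by positivity)
    _ = ε * B * w * Real.exp ((d + ε) * A) := by ring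
  have key2 : ‖(ε : ℂ) * (Complex.exp (-Complex.I * (-r) * d) * FL φ ((ε : ℂ) * (-r)))‖
      ≤ ε * B * w * Real.exp ((d + ε) * A) := by
    rw [norm_mul, norm_mul, hne2]
    have : ‖(ε : ℂ)‖ = ε := by
      rw [Complex.norm_real, Real.norm_eq_abs, abs_of_pos hε]
    rw [this]
    have hb : Real.exp (-(r.im * d)) * ‖FL φ ((ε : ℂ) * (-r))‖
        ≤ Real.exp (-(r.im * d)) * (B * w * Real.exp (ε * r.im)) :=
      mul_le_mul_of_nonneg_left hFL2 (Real.exp_pos _).le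
    have he : Real.exp (-(r.im * d)) * (B * w * Real.exp (ε * r.im))
        = B * w * Real.exp (-(r.im * d) + ε * r.im) := by
      rw [Real.exp_add]; ring
    have hle : Real.exp (-(r.im * d) + ε * r.im) ≤ Real.exp ((d + ε) * A) := by
      apply Real.exp_le_exp.2
      nlinarith
    calc ε * (Real.exp (-(r.im * d)) * ‖FL φ ((ε : ℂ) * (-r))‖)
        ≤ ε * (B * w * Real.exp (-(r.im * d) + ε * r.im)) := by
          rw [← he]; exact mul_le_mul_of_nonneg_left hb hε.le
    _ ≤ ε * (B * w * Real.exp ((d + ε) * A)) := by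
          apply mul_le_mul_of_nonneg_left _ hε.le
          exact mul_le_mul_of_nonneg_left hle (by positivity)
    _ = ε * B * w * Real.exp ((d + ε) * A) := by ring
  calc ‖((ε : ℂ) * (Complex.exp (-Complex.I * r * d) * FL φ ((ε:ℂ) * r))
        + (ε : ℂ) * (Complex.exp (-Complex.I * (-r) * d) * FL φ ((ε:ℂ) * (-r))))‖
      ≤ ‖(ε : ℂ) * (Complex.exp (-Complex.I * r * d) * FL φ ((ε:ℂ) * r))‖
        + ‖(ε : ℂ) * (Complex.exp (-Complex.I * (-r) * d) * FL φ ((ε:ℂ) * (-r)))‖ :=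
        norm_add_le _ _
  _ ≤ ε * B * w * Real.exp ((d + ε) * A) + ε * B * w * Real.exp ((d + ε) * A) :=
        add_le_add key1 key2
  _ = 2 * ε * B * w * Real.exp ((d + ε) * A) := by ring

lemma sq_inv_summable : Summable (fun m : ℕ => (((m : ℝ) + 1) ^ 2)⁻¹) := by
  have h : Summable (fun n : ℕ => ((n : ℝ) ^ 2)⁻¹) := by
    have := Real.summable_one_div_nat_pow.mpr (le_refl 2)
    simpa [one_div] using this
  have h2 := (summable_nat_add_iff 1).mpr h
  simpa using h2

lemma count_sum (r : ℕ → ℂ) (C₀ : ℝ) (hC₀ : 0 < C₀)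
    (hcount : ∀ R : ℝ, 0 ≤ R → {j : ℕ | |(r j).re| ≤ R}.Finite ∧
      ({j : ℕ | |(r j).re| ≤ R}.ncard : ℝ) ≤ C₀ * (1 + R ^ 2))
    (A : ℝ) {ε : ℝ} (hε : 0 < ε) (hε1 : ε < 1)
    (u : Finset {j : ℕ | (r j).im < A}) :
    ∑ j ∈ u, ((1 + ε * |(r j.1).re|) ^ 4)⁻¹
      ≤ 2 * C₀ * (∑' m : ℕ, (((m : ℝ) + 1) ^ 2)⁻¹) * (ε ^ 2)⁻¹ := by
  classical
  set w : {j : ℕ | (r j).im < A} → ℝ := fun j => ((1 + ε * |(r j.1).re|) ^ 4)⁻¹ with hwdef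
  set k : {j : ℕ | (r j).im < A} → ℕ := fun j => ⌊ε * |(r j.1).re|⌋₊ with hkdef
  rw [← Finset.sum_fiberwise_of_maps_to (g := k) (t := u.image k)
    (fun x hx => Finset.mem_image_of_mem k hx) w]
  have inner_le : ∀ m ∈ u.image k,
      ∑ j ∈ u.filter (fun j => k j = m), w j
        ≤ (2 * C₀ * (ε ^ 2)⁻¹) * (((m : ℝ) + 1) ^ 2)⁻¹ := by
    intro m _
    have hbound : ∀ j ∈ u.filter (fun j => k j = m), w j ≤ (((m : ℝ) + 1) ^ 4)⁻¹ := by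
      intro j hj
      have hkj : k j = m := (Finset.mem_filter.mp hj).2
      have hfl : (m : ℝ) ≤ ε * |(r j.1).re| := by
        rw [← hkj]
        exact Nat.floor_le (by positivity)
      rw [hwdef]
      apply inv_anti₀ (by positivity)
      apply pow_le_pow_left₀ (by positivity)
      linarith
    have hcard : ((u.filter (fun j => k j = m)).card : ℝ)
        ≤ C₀ * (1 + (((m : ℝ) + 1) / ε) ^ 2) := by
      have hR : (0 : ℝ) ≤ ((m : ℝ) + 1) / ε := by positivity
      obtain ⟨hfin, hcard⟩ := hcount (((m : ℝ) + 1) / ε) hR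
      have hsub : ∀ j ∈ u.filter (fun j => k j = m), (j.1 : ℕ) ∈ hfin.toFinset := by
        intro j hj
        have hkj : k j = m := (Finset.mem_filter.mp hj).2
        have hlt : ε * |(r j.1).re| < (m : ℝ) + 1 := by
          rw [← hkj]
          exact_mod_cast Nat.lt_floor_add_one (ε * |(r j.1).re|)
        rw [Set.Finite.mem_toFinset]
        show |(r j.1).re| ≤ ((m : ℝ) + 1) / ε
        rw [le_div_iff₀ hε]
        nlinarith [abs_nonneg (r j.1).re]
      have hinj : Set.InjOn (fun j : {j : ℕ | (r j).im < A} => (j.1 : ℕ))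
          (u.filter (fun j => k j = m)) := fun a _ b _ hab => Subtype.ext hab
      have := Finset.card_le_card_of_injOn _ hsub hinj
      calc ((u.filter (fun j => k j = m)).card : ℝ) ≤ (hfin.toFinset.card : ℝ) := by
            exact_mod_cast this
      _ = ({j : ℕ | |(r j).re| ≤ ((m : ℝ) + 1) / ε}.ncard : ℝ) := by
            rw [Set.ncard_eq_toFinset_card _ hfin]
      _ ≤ C₀ * (1 + (((m : ℝ) + 1) / ε) ^ 2) := hcard
    calc ∑ j ∈ u.filter (fun j => k j = m), w j
        ≤ (u.filter (fun j => k j = m)).card • (((m : ℝ) + 1) ^ 4)⁻¹ :=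
          Finset.sum_le_card_nsmul _ _ _ hbound
    _ = ((u.filter (fun j => k j = m)).card : ℝ) * (((m : ℝ) + 1) ^ 4)⁻¹ := by
          rw [nsmul_eq_mul]
    _ ≤ (C₀ * (1 + (((m : ℝ) + 1) / ε) ^ 2)) * (((m : ℝ) + 1) ^ 4)⁻¹ := by
          apply mul_le_mul_of_nonneg_right hcard (by positivity)
    _ ≤ (2 * C₀ * (ε ^ 2)⁻¹) * (((m : ℝ) + 1) ^ 2)⁻¹ := by
          have hm1 : (1 : ℝ) ≤ (m : ℝ) + 1 := by
            have := Nat.cast_nonneg (α := ℝ) m; linarith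
          have h1 : (1 : ℝ) ≤ (((m : ℝ) + 1) / ε) ^ 2 := by
            apply one_le_pow₀
            rw [le_div_iff₀ hε]
            nlinarith
          have heq : (((m : ℝ) + 1) / ε) ^ 2 * (((m : ℝ) + 1) ^ 4)⁻¹
              = (ε ^ 2)⁻¹ * (((m : ℝ) + 1) ^ 2)⁻¹ := by
            field_simp
          calc (C₀ * (1 + (((m : ℝ) + 1) / ε) ^ 2)) * (((m : ℝ) + 1) ^ 4)⁻¹
              ≤ (C₀ * (2 * (((m : ℝ) + 1) / ε) ^ 2)) * (((m : ℝ) + 1) ^ 4)⁻¹ := by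
                apply mul_le_mul_of_nonneg_right _ (by positivity)
                apply mul_le_mul_of_nonneg_left _ hC₀.le
                linarith
          _ = 2 * C₀ * ((((m : ℝ) + 1) / ε) ^ 2 * (((m : ℝ) + 1) ^ 4)⁻¹) := by ring
          _ = (2 * C₀ * (ε ^ 2)⁻¹) * (((m : ℝ) + 1) ^ 2)⁻¹ := by rw [heq]; ring
  calc ∑ m ∈ u.image k, ∑ j ∈ u.filter (fun j => k j = m), w j
      ≤ ∑ m ∈ u.image k, (2 * C₀ * (ε ^ 2)⁻¹) * (((m : ℝ) + 1) ^ 2)⁻¹ :=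
        Finset.sum_le_sum inner_le
  _ = (2 * C₀ * (ε ^ 2)⁻¹) * ∑ m ∈ u.image k, (((m : ℝ) + 1) ^ 2)⁻¹ := by
        rw [Finset.mul_sum]
  _ ≤ (2 * C₀ * (ε ^ 2)⁻¹) * ∑' m : ℕ, (((m : ℝ) + 1) ^ 2)⁻¹ := by
        apply mul_le_mul_of_nonneg_left _ (by positivity)
        exact Summable.sum_le_tsum _ (fun m _ => by positivity) sq_inv_summable
  _ = 2 * C₀ * (∑' m : ℕ, (((m : ℝ) + 1) ^ 2)⁻¹) * (ε ^ 2)⁻¹ := by ring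

/-- Bound for the trace-formula sum over eigenvalues with small imaginary part:
`∑_{Im r_j < A} |ĝ(r_j)| ≤ C ε⁻¹ e^{(d+ε)A}` where
`g(s) = φ((s−d)/ε) + φ((−s−d)/ε)`. -/
theorem small_imaginary_part_sum_bound
    (r : ℕ → ℂ) (him : ∀ j, 0 ≤ (r j).im)
    (C₀ : ℝ) (hC₀ : 0 < C₀)
    (hcount : ∀ R : ℝ, 0 ≤ R → {j : ℕ | |(r j).re| ≤ R}.Finite ∧
      ({j : ℕ | |(r j).re| ≤ R}.ncard : ℝ) ≤ C₀ * (1 + R ^ 2))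
    (φ : ℝ → ℂ) (hφ : ContDiff ℝ (⊤ : ℕ∞) φ)
    (hsupp : Function.support φ ⊆ Set.Ioo (-1 : ℝ) 1)
    (A : ℝ) (hA : 0 < A) :
    ∃ C : ℝ, 0 < C ∧ ∀ ε : ℝ, ε ∈ Set.Ioo (0 : ℝ) 1 → ∀ d : ℝ, 1 < d →
      Summable (fun j : {j : ℕ | (r j).im < A} =>
        ‖∫ s : ℝ, Complex.exp (-Complex.I * r j.1 * s) *
          (φ ((s - d) / ε) + φ ((-s - d) / ε))‖) ∧
      ∑' j : {j : ℕ | (r j).im < A},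
          ‖∫ s : ℝ, Complex.exp (-Complex.I * r j.1 * s) *
            (φ ((s - d) / ε) + φ ((-s - d) / ε))‖ ≤
        C * ε⁻¹ * Real.exp ((d + ε) * A) := by
  have hφ' : ContDiff ℝ (⊤ : ℕ∞) φ := hφ.of_le (by simp)
  have hs' : support φ ⊆ Icc (-1 : ℝ) 1 := hsupp.trans Set.Ioo_subset_Icc_self
  obtain ⟨B, hB, hdecay⟩ := FL_decay hφ' hs'
  set S0 : ℝ := ∑' m : ℕ, (((m : ℝ) + 1) ^ 2)⁻¹ with hS0
  have hSnn : 0 ≤ S0 := tsum_nonneg (fun m => by positivity)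
  refine ⟨4 * C₀ * S0 * B + 1, by positivity, ?_⟩
  intro ε hε d hd
  obtain ⟨hε0, hε1⟩ := hε
  set g : {j : ℕ | (r j).im < A} → ℝ := fun j =>
    ‖∫ s : ℝ, Complex.exp (-Complex.I * r j.1 * s) *
      (φ ((s - d) / ε) + φ ((-s - d) / ε))‖ with hg
  have hgnn : (0 : {j : ℕ | (r j).im < A} → ℝ) ≤ g := fun j => norm_nonneg _
  have hsum_le : ∀ u : Finset {j : ℕ | (r j).im < A},
      ∑ j ∈ u, g j ≤ 4 * C₀ * S0 * B * ε⁻¹ * Real.exp ((d + ε) * A) := by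
    intro u
    have hterm : ∀ j ∈ u, g j ≤ 2 * ε * B * ((1 + ε * |(r j.1).re|) ^ 4)⁻¹
        * Real.exp ((d + ε) * A) := fun j _ =>
      term_bound hφ'.continuous hs' hB hdecay hε0 hε1 hd hA (him j.1) j.2
    calc ∑ j ∈ u, g j
        ≤ ∑ j ∈ u, 2 * ε * B * ((1 + ε * |(r j.1).re|) ^ 4)⁻¹ * Real.exp ((d + ε) * A) :=
          Finset.sum_le_sum hterm
    _ = (2 * ε * B * Real.exp ((d + ε) * A)) * ∑ j ∈ u, ((1 + ε * |(r j.1).re|) ^ 4)⁻¹ := by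
          rw [Finset.mul_sum]
          apply Finset.sum_congr rfl
          intro j _
          ring
    _ ≤ (2 * ε * B * Real.exp ((d + ε) * A)) * (2 * C₀ * S0 * (ε ^ 2)⁻¹) := by
          apply mul_le_mul_of_nonneg_left (count_sum r C₀ hC₀ hcount A hε0 hε1 u)
          positivity
    _ = 4 * C₀ * S0 * B * ε⁻¹ * Real.exp ((d + ε) * A) := by
          field_simp
          ring
  have hsummable : Summable g := summable_of_sum_le hgnn hsum_le
  refine ⟨hsummable, ?_⟩
  calc ∑' j, g j ≤ 4 * C₀ * S0 * B * ε⁻¹ * Real.exp ((d + ε) * A) :=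
        Summable.tsum_le_of_sum_le hsummable hsum_le
  _ ≤ (4 * C₀ * S0 * B + 1) * ε⁻¹ * Real.exp ((d + ε) * A) := by
        apply mul_le_mul_of_nonneg_right _ (Real.exp_pos _).le
        apply mul_le_mul_of_nonneg_right _ (by positivity)
        linarith
end

section
/- Let φ : ℝ → ℂ be infinitely differentiable with support contained in (−1,1). Then there exists a constant C > 0 (depending only on φ) such that for all ε ∈ (0,1) and all d > 1, setting g(s) = φ((s−d)/ε) + φ((−s−d)/ε) and ĝ(r) = ∫_ℝ e^{−irs} g(s) ds, one has | ∫_ℝ r · ĝ(r) · tanh(π r) dr | ≤ C ε^{−1}. -/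
open Complex Real MeasureTheory SchwartzMap

lemma tanh_norm_le_one (t : ℝ) : ‖Complex.tanh (t : ℂ)‖ ≤ 1 := by
  rw [← Complex.ofReal_tanh, Complex.norm_real, Real.norm_eq_abs,
    Real.tanh_eq_sinh_div_cosh, abs_div, abs_of_pos (Real.cosh_pos t),
    div_le_one (Real.cosh_pos t), Real.abs_sinh]
  calc Real.sinh |t| ≤ Real.cosh |t| := (Real.sinh_lt_cosh _).le
    _ = Real.cosh t := Real.cosh_abs t

lemma exp_I_mul_norm (a : ℝ) : ‖Complex.exp (-Complex.I * a)‖ = 1 := by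
  rw [show (-Complex.I * a : ℂ) = ((-a : ℝ) : ℂ) * Complex.I by push_cast; ring]
  rw [Complex.norm_exp_ofReal_mul_I]

/-- Bound for the identity contribution in the twisted Selberg trace formula:
`|∫ r ĝ(r) tanh(πr) dr| ≤ C ε⁻¹` where `g(s) = φ((s−d)/ε) + φ((−s−d)/ε)`. -/
theorem identity_contribution_bound
    (φ : ℝ → ℂ) (hφ : ContDiff ℝ (⊤ : ℕ∞) φ)
    (hsupp : Function.support φ ⊆ Set.Ioo (-1 : ℝ) 1) :
    ∃ C : ℝ, 0 < C ∧ ∀ ε : ℝ, ε ∈ Set.Ioo (0 : ℝ) 1 → ∀ d : ℝ, 1 < d →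
      ‖(∫ x : ℝ, (x : ℂ) *
          (∫ s : ℝ, Complex.exp (-Complex.I * x * s) *
            (φ ((s - d) / ε) + φ ((-s - d) / ε))) *
          Complex.tanh (Real.pi * x))‖ ≤ C * ε⁻¹ := by
  have hc : Continuous φ := hφ.continuous
  -- compact support of φ
  have hcs : HasCompactSupport φ := by
    apply HasCompactSupport.intro (isCompact_Icc (a := (-1:ℝ)) (b := 1))
    intro x hx
    by_contra h
    exact hx (Set.Ioo_subset_Icc_self (hsupp h))
  have htsupp : tsupport φ ⊆ Set.Icc (-1 : ℝ) 1 :=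
    closure_minimal (hsupp.trans Set.Ioo_subset_Icc_self) isClosed_Icc
  -- build the Schwartz map
  let ψ : 𝓢(ℝ, ℂ) := ⟨φ, hφ.of_le (by simp), by
    intro k n
    obtain ⟨C, hC⟩ := (hφ.continuous_iteratedFDeriv (by exact_mod_cast le_top)).bounded_above_of_compact_support
      (hcs.iteratedFDeriv n)
    refine ⟨max C 0, fun x => ?_⟩
    by_cases hx : x ∈ tsupport (iteratedFDeriv ℝ n φ)
    · have hx1 : ‖x‖ ≤ 1 := by
        have := htsupp (tsupport_iteratedFDeriv_subset n hx)
        rw [Real.norm_eq_abs, abs_le]; exact ⟨this.1, this.2⟩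
      calc ‖x‖ ^ k * ‖iteratedFDeriv ℝ n φ x‖
          ≤ 1 * C := by
            apply mul_le_mul (pow_le_one₀ (norm_nonneg _) hx1) (hC x) (norm_nonneg _) one_pos.le
        _ ≤ max C 0 := by simp
    · rw [image_eq_zero_of_notMem_tsupport hx]
      simp⟩
  -- the scaled Fourier transform
  set F : ℝ → ℂ := fun u => ∫ t : ℝ, Complex.exp (-Complex.I * u * t) * φ t with hFdef
  set G : 𝓢(ℝ, ℂ) := SchwartzMap.fourierTransformCLM ℝ ψ with hGdef
  have hπC : ((π : ℝ) : ℂ) ≠ 0 := Complex.ofReal_ne_zero.mpr Real.pi_ne_zero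
  have hF : ∀ u : ℝ, F u = G (u / (2 * π)) := by
    intro u
    have : G (u / (2 * π)) = FourierTransform.fourier φ (u / (2 * π)) := by
      rw [hGdef]; rw [SchwartzMap.fourierTransformCLM_apply]; rfl
    rw [this, Real.fourier_real_eq_integral_exp_smul]
    refine (integral_congr_ae (Filter.Eventually.of_forall fun v => ?_)).symm
    rw [smul_eq_mul]
    congr 1
    congr 1
    push_cast
    field_simp [hπC]
  -- K and its integrability
  set K : ℝ → ℝ := fun u => ‖u‖ * ‖F u‖ with hKdef
  have h2π : (2 : ℝ) * π ≠ 0 := by positivity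
  have hKint : Integrable K := by
    have h1 : Integrable (fun v : ℝ => ‖v‖ ^ 1 * ‖G v‖) := G.integrable_pow_mul volume 1
    have h2 : Integrable (fun u : ℝ => ‖u / (2 * π)‖ ^ 1 * ‖G (u / (2 * π))‖) :=
      h1.comp_div h2π
    have hKeq : K = fun u => (2 * π) * (‖u / (2 * π)‖ ^ 1 * ‖G (u / (2 * π))‖) := by
      funext u
      rw [hKdef]
      simp only [pow_one, hF u]
      rw [Real.norm_eq_abs, Real.norm_eq_abs, abs_div]
      rw [abs_of_pos (by positivity : (0:ℝ) < 2 * π)]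
      field_simp
    rw [hKeq]
    exact h2.const_mul _
  set MK : ℝ := ∫ u, K u with hMKdef
  have hMK0 : 0 ≤ MK := integral_nonneg fun u => by positivity
  refine ⟨2 * MK + 1, by positivity, ?_⟩
  rintro ε ⟨hε0, hε1⟩ d _
  have hεne : ε ≠ 0 := hε0.ne'
  have hεC : ((ε : ℝ) : ℂ) ≠ 0 := Complex.ofReal_ne_zero.mpr hεne
  -- compact support of scaled functions
  have hA_cs : HasCompactSupport (fun s : ℝ => φ ((s - d) / ε)) := by
    have := hcs.comp_homeomorph
      ((Homeomorph.subRight d).trans (Homeomorph.mulRight₀ ε⁻¹ (inv_ne_zero hεne)))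
    convert this using 1
    ext s; simp [Function.comp_def, div_eq_mul_inv]
  have hB_cs : HasCompactSupport (fun s : ℝ => φ ((-s - d) / ε)) := by
    have := hcs.comp_homeomorph
      ((Homeomorph.neg ℝ).trans ((Homeomorph.subRight d).trans
        (Homeomorph.mulRight₀ ε⁻¹ (inv_ne_zero hεne))))
    convert this using 1
    ext s; simp [Function.comp_def, div_eq_mul_inv]
  -- integrability of the two pieces
  have hAint : ∀ r : ℝ, Integrable (fun s : ℝ =>
      Complex.exp (-Complex.I * r * s) * φ ((s - d) / ε)) := by
    intro r
    apply Continuous.integrable_of_hasCompactSupport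
    · exact (Complex.continuous_exp.comp (by fun_prop)).mul (hc.comp (by fun_prop))
    · exact hA_cs.mul_left
  have hBint : ∀ r : ℝ, Integrable (fun s : ℝ =>
      Complex.exp (-Complex.I * r * s) * φ ((-s - d) / ε)) := by
    intro r
    apply Continuous.integrable_of_hasCompactSupport
    · exact (Complex.continuous_exp.comp (by fun_prop)).mul (hc.comp (by fun_prop))
    · exact hB_cs.mul_left
  -- key identity for the inner integral pieces
  have key : ∀ r : ℝ, (∫ s : ℝ, Complex.exp (-Complex.I * r * s) * φ ((s - d) / ε))
      = ε * (Complex.exp (-Complex.I * r * d) * F (ε * r)) := by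
    intro r
    have step1 : (fun s : ℝ => Complex.exp (-Complex.I * r * s) * φ ((s - d) / ε))
        = fun s : ℝ => (fun y : ℝ =>
            Complex.exp (-Complex.I * r * d + -Complex.I * ((ε * r : ℝ) : ℂ) * y) * φ y)
          ((s - d) / ε) := by
      funext s
      simp only
      congr 1
      congr 1
      push_cast
      field_simp
      ring
    rw [step1]
    have step2 : (∫ s : ℝ, (fun y : ℝ =>
          Complex.exp (-Complex.I * r * d + -Complex.I * ((ε * r : ℝ) : ℂ) * y) * φ y)
        ((s - d) / ε))
        = ∫ s : ℝ, (fun y : ℝ =>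
            Complex.exp (-Complex.I * r * d + -Complex.I * ((ε * r : ℝ) : ℂ) * y) * φ y)
          (s / ε) := by
      exact MeasureTheory.integral_sub_right_eq_self (μ := volume)
        (fun y : ℝ => (fun t : ℝ =>
          Complex.exp (-Complex.I * r * d + -Complex.I * ((ε * r : ℝ) : ℂ) * t) * φ t) (y / ε)) d
    rw [step2]
    rw [MeasureTheory.Measure.integral_comp_div (fun y : ℝ =>
      Complex.exp (-Complex.I * r * d + -Complex.I * ((ε * r : ℝ) : ℂ) * y) * φ y) ε]
    have step3 : (∫ t : ℝ,
        Complex.exp (-Complex.I * r * d + -Complex.I * ((ε * r : ℝ) : ℂ) * t) * φ t)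
        = Complex.exp (-Complex.I * r * d) * F (ε * r) := by
      rw [hFdef]
      simp only
      rw [← MeasureTheory.integral_const_mul]
      exact integral_congr_ae (Filter.Eventually.of_forall fun t => by
        simp only [Complex.exp_add]; ring)
    rw [step3, abs_of_pos hε0, Complex.real_smul]
  -- the reflected piece
  have keyB : ∀ r : ℝ, (∫ s : ℝ, Complex.exp (-Complex.I * r * s) * φ ((-s - d) / ε))
      = ε * (Complex.exp (-Complex.I * (-r : ℝ) * d) * F (ε * (-r))) := by
    intro r
    rw [← MeasureTheory.integral_neg_eq_self
      (fun s : ℝ => Complex.exp (-Complex.I * r * s) * φ ((-s - d) / ε)) volume]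
    rw [show (fun s : ℝ => (fun t : ℝ =>
        Complex.exp (-Complex.I * r * t) * φ ((-t - d) / ε)) (-s))
        = fun s : ℝ => Complex.exp (-Complex.I * ((-r : ℝ) : ℂ) * s) * φ ((s - d) / ε) by
      funext s
      simp only
      rw [neg_neg]
      congr 2
      push_cast
      ring]
    exact key (-r)
  -- split of the inner integral
  have hsplit : ∀ r : ℝ, (∫ s : ℝ, Complex.exp (-Complex.I * r * s) *
        (φ ((s - d) / ε) + φ ((-s - d) / ε)))
      = (∫ s : ℝ, Complex.exp (-Complex.I * r * s) * φ ((s - d) / ε))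
        + ∫ s : ℝ, Complex.exp (-Complex.I * r * s) * φ ((-s - d) / ε) := by
    intro r
    rw [← integral_add (hAint r) (hBint r)]
    exact integral_congr_ae (Filter.Eventually.of_forall fun s => by ring)
  -- norm bound on the inner integral
  have hinner : ∀ r : ℝ, ‖(∫ s : ℝ, Complex.exp (-Complex.I * r * s) *
        (φ ((s - d) / ε) + φ ((-s - d) / ε)))‖
      ≤ ε * ‖F (ε * r)‖ + ε * ‖F ((-ε) * r)‖ := by
    intro r
    rw [hsplit r, key r, keyB r, show ε * (-r) = (-ε) * r by ring]
    have e1 : ‖Complex.exp (-Complex.I * r * d)‖ = 1 := by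
      rw [show (-Complex.I * r * d : ℂ) = -Complex.I * ((r * d : ℝ) : ℂ) by push_cast; ring]
      exact exp_I_mul_norm _
    have e2 : ‖Complex.exp (-Complex.I * ((-r : ℝ) : ℂ) * d)‖ = 1 := by
      rw [show (-Complex.I * ((-r : ℝ) : ℂ) * d : ℂ)
        = -Complex.I * (((-r) * d : ℝ) : ℂ) by push_cast; ring]
      exact exp_I_mul_norm _
    calc ‖(ε : ℂ) * (Complex.exp (-Complex.I * r * d) * F (ε * r))
          + (ε : ℂ) * (Complex.exp (-Complex.I * ((-r : ℝ) : ℂ) * d) * F ((-ε) * r))‖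
        ≤ ‖(ε : ℂ) * (Complex.exp (-Complex.I * r * d) * F (ε * r))‖
          + ‖(ε : ℂ) * (Complex.exp (-Complex.I * ((-r : ℝ) : ℂ) * d) * F ((-ε) * r))‖ :=
          norm_add_le _ _
      _ = ε * ‖F (ε * r)‖ + ε * ‖F ((-ε) * r)‖ := by
          rw [norm_mul, norm_mul, norm_mul, norm_mul, e1, e2, Complex.norm_real,
            Real.norm_eq_abs, abs_of_pos hε0]
          ring
  -- final estimate
  have hdom : Integrable (fun x : ℝ => K (ε * x) + K ((-ε) * x)) :=
    (hKint.comp_mul_left' hεne).add (hKint.comp_mul_left' (neg_ne_zero.mpr hεne))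
  calc ‖∫ x : ℝ, (x : ℂ) *
          (∫ s : ℝ, Complex.exp (-Complex.I * x * s) *
            (φ ((s - d) / ε) + φ ((-s - d) / ε))) *
          Complex.tanh (Real.pi * x)‖
      ≤ ∫ x : ℝ, ‖(x : ℂ) *
          (∫ s : ℝ, Complex.exp (-Complex.I * x * s) *
            (φ ((s - d) / ε) + φ ((-s - d) / ε))) *
          Complex.tanh (Real.pi * x)‖ := norm_integral_le_integral_norm _
    _ ≤ ∫ x : ℝ, (K (ε * x) + K ((-ε) * x)) := by
        refine integral_mono_of_nonneg
          (Filter.Eventually.of_forall fun x => norm_nonneg _) hdom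
          (Filter.Eventually.of_forall fun x => ?_)
        have htanh : ‖Complex.tanh ((Real.pi : ℂ) * x)‖ ≤ 1 := by
          rw [show ((Real.pi : ℂ) * x) = ((π * x : ℝ) : ℂ) by push_cast; ring]
          exact tanh_norm_le_one _
        calc ‖(x : ℂ) *
              (∫ s : ℝ, Complex.exp (-Complex.I * x * s) *
                (φ ((s - d) / ε) + φ ((-s - d) / ε))) *
              Complex.tanh (Real.pi * x)‖
            = |x| * ‖(∫ s : ℝ, Complex.exp (-Complex.I * x * s) *
                (φ ((s - d) / ε) + φ ((-s - d) / ε)))‖ * ‖Complex.tanh (Real.pi * x)‖ := by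
              rw [norm_mul, norm_mul, Complex.norm_real, Real.norm_eq_abs]
          _ ≤ |x| * (ε * ‖F (ε * x)‖ + ε * ‖F ((-ε) * x)‖) * 1 := by
              refine mul_le_mul (mul_le_mul_of_nonneg_left (hinner x) (abs_nonneg x))
                htanh (norm_nonneg _) (by positivity)
          _ = K (ε * x) + K ((-ε) * x) := by
              rw [hKdef]
              simp only [Real.norm_eq_abs, abs_mul, abs_neg, abs_of_pos hε0]
              ring
    _ = (∫ x : ℝ, K (ε * x)) + ∫ x : ℝ, K ((-ε) * x) :=
        integral_add (hKint.comp_mul_left' hεne) (hKint.comp_mul_left' (neg_ne_zero.mpr hεne))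
    _ = ε⁻¹ * MK + ε⁻¹ * MK := by
        rw [MeasureTheory.Measure.integral_comp_mul_left K ε,
          MeasureTheory.Measure.integral_comp_mul_left K (-ε), smul_eq_mul, smul_eq_mul,
          abs_inv, abs_inv, abs_neg, abs_of_pos hε0, hMKdef]
    _ ≤ (2 * MK + 1) * ε⁻¹ := by
        have hinvpos : 0 < ε⁻¹ := inv_pos.mpr hε0
        nlinarith
end
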